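/- arXiv:1311.6036 — 7 statements merged into one kernel-verified Lean document; each statement's English description precedes it below -/
import Mathlib

section
/- Fix constants M > 1, K > 0 and an integer S ≥ 0. There exists η₀ > 0 (depending only on M, K and S) such that for all η ∈ (0, η₀), all L ∈ ℕ and all E with 0 ≤ E < η⁴/L⁴ and E ≤ K, the following holds for every Jacobi matrix H as in the context: if u and v are orthonormal eigenvectors of H associated to eigenvalues lying in [−E, E], and if r_u(n)·r_v(n) ≤ η/L for every n ∈ {1,…,L}, then there exist x₋, x₊ ∈ {1,…,L} with x₊ − x₋ ≥ S such that the principal submatrix H|_{{1,…,x₋}} has at least one eigenvalue in [−E·L⁴/η⁴, E·L⁴/η⁴] and the principal submatrix H|_{{x₊,…,L}} has at least one eigenvalue in [−E·L⁴/η⁴, E·L⁴/η⁴]. -/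
/-- Jacobi matrix on `ℓ²({1,…,L})` with Dirichlet boundary conditions:
`(Hu)(n) = a(n+1)u(n+1) + a(n)u(n-1) + V(n)u(n)`, site `n = i.val + 1`. -/
noncomputable def jacobiMatrix (L : ℕ) (a V : ℕ → ℝ) : Matrix (Fin L) (Fin L) ℝ :=
  fun i j =>
    if i.val + 1 = j.val then a (j.val + 1)
    else if j.val + 1 = i.val then a (i.val + 1)
    else if i = j then V (i.val + 1) else 0

/-- Number of eigenvalues (counted with multiplicity) of `A` in the set `S`. -/
noncomputable def eigCount {n : ℕ} (A : Matrix (Fin n) (Fin n) ℝ) (S : Set ℝ) : ℕ :=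
  Module.finrank ℝ (⨆ μ ∈ S, Module.End.eigenspace (Matrix.toLin' A) μ : Submodule ℝ (Fin n → ℝ))

/-- Principal submatrix of the Jacobi matrix on the index set `{x,…,y}`. -/
noncomputable def jacobiSub (x y : ℕ) (a V : ℕ → ℝ) : Matrix (Fin (y - x + 1)) (Fin (y - x + 1)) ℝ :=
  jacobiMatrix (y - x + 1) (fun n => a (n + (x - 1))) (fun n => V (n + (x - 1)))

/-- Extension of `u : Fin L → ℝ` to `ℕ` by `0`; site `n ∈ {1,…,L}` is `u ⟨n-1⟩`. -/
def extV (L : ℕ) (u : Fin L → ℝ) (n : ℕ) : ℝ :=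
  if h : 1 ≤ n ∧ n ≤ L then u ⟨n - 1, by omega⟩ else 0

/-- Prüfer radius `r_u(n) = √(u(n)² + u(n-1)²)`. -/
noncomputable def pruferR (L : ℕ) (u : Fin L → ℝ) (n : ℕ) : ℝ :=
  Real.sqrt (extV L u n ^ 2 + extV L u (n - 1) ^ 2)

/-!
Each normalized eigenvector has a site where its squared Prüfer radius is at least `1 / L`; there
the other one is at most `η² / L`. So `r_u > r_v` at the peak `p` of `u`, `r_v > r_u` at the peak
`q` of `v`, and the two radii cross in between. The transfer matrices and their inverses are
uniformly bounded, so on the `S + 3` sites after the crossing `r_u` and `r_v` are comparable, which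
also keeps the crossing far from `q`. Cut the chain next to the crossing and again `S` sites
further. On each half-chain, the combination `v(k) u - u(k) v` vanishing at the cut `k` is an
approximate eigenvector: its residual is `(E_u - E_v) u(k) v = O(E)`, while its value at the peak
of `u` (resp. `v`) bounds its norm below by a power of `η / L`. Since a symmetric matrix `B`
satisfies `dist(λ, spec B) ‖z‖ ≤ ‖(B - λ) z‖`, each half-chain has an eigenvalue of size
`O(E L⁴ / η⁴)`.
-/

open Finset Matrix Module End

section Spectral

theorem LinearMap.IsSymmetric.exists_hasEigenvalue_sq_mul_norm_sq_le
    {E : Type*} [NormedAddCommGroup E] [InnerProductSpace ℝ E] [FiniteDimensional ℝ E]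
    [Nontrivial E] {T : E →ₗ[ℝ] E} (hT : T.IsSymmetric) (z : E) (c : ℝ) :
    ∃ μ, HasEigenvalue T μ ∧ (μ - c) ^ 2 * ‖z‖ ^ 2 ≤ ‖T z - c • z‖ ^ 2 := by
  set b := hT.eigenvectorBasis rfl
  have : Nonempty (Fin (finrank ℝ E)) := ⟨⟨0, finrank_pos⟩⟩
  obtain ⟨i₀, -, hmin⟩ := univ.exists_min_image
    (fun i => (hT.eigenvalues rfl i - c) ^ 2) univ_nonempty
  refine ⟨_, hT.hasEigenvalue_eigenvalues rfl i₀, ?_⟩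
  rw [← b.repr.norm_map z, ← b.repr.norm_map, EuclideanSpace.norm_sq_eq,
    EuclideanSpace.norm_sq_eq, mul_sum]
  refine sum_le_sum fun i _ => ?_
  have hcoord : b.repr (T z - c • z) i = (hT.eigenvalues rfl i - c) * b.repr z i := by
    simp only [map_sub, map_smul, PiLp.sub_apply, PiLp.smul_apply, smul_eq_mul, b,
      hT.eigenvectorBasis_apply_self_apply, RCLike.ofReal_real_eq_id, id_eq]
    ring
  rw [hcoord, Real.norm_eq_abs, Real.norm_eq_abs, sq_abs, sq_abs, mul_pow]
  exact mul_le_mul_of_nonneg_right (hmin i (mem_univ _)) (sq_nonneg _)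

theorem Matrix.IsHermitian.exists_hasEigenvalue_sq_mul_le {n : ℕ} [NeZero n]
    {B : Matrix (Fin n) (Fin n) ℝ} (hB : B.IsHermitian) (z : Fin n → ℝ) (c : ℝ) :
    ∃ μ, HasEigenvalue (toLin' B) μ ∧
      (μ - c) ^ 2 * ∑ i, z i ^ 2 ≤ ∑ i, ((B *ᵥ z) i - c * z i) ^ 2 := by
  obtain ⟨μ, hμ, hle⟩ := (isSymmetric_toEuclideanLin_iff.mpr hB)
    |>.exists_hasEigenvalue_sq_mul_norm_sq_le (WithLp.toLp 2 z) c
  refine ⟨μ, ?_, by simpa [EuclideanSpace.norm_sq_eq, toLpLin_apply] using hle⟩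
  rw [hasEigenvalue_iff_mem_spectrum, spectrum_toLin', ← spectrum_toLpLin 2]
  exact hμ.mem_spectrum

theorem one_le_eigCount {n : ℕ} {A : Matrix (Fin n) (Fin n) ℝ} {S : Set ℝ} {μ : ℝ}
    (hμ : HasEigenvalue (toLin' A) μ) (hμS : μ ∈ S) : 1 ≤ eigCount A S :=
  Submodule.one_le_finrank_iff.mpr <|
    ne_bot_of_le_ne_bot (hasEigenvalue_iff.mp hμ) (le_biSup (fun ν => eigenspace _ ν) hμS)

end Spectral

section Jacobi

variable (a V : ℕ → ℝ)

def jacobiOp (Z : ℕ → ℝ) (n : ℕ) : ℝ :=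
  a (n + 1) * Z (n + 1) + a n * Z (n - 1) + V n * Z n

theorem jacobiOp_sub_smul (f g : ℕ → ℝ) (α β : ℝ) (n : ℕ) :
    jacobiOp a V (fun k => α * f k - β * g k) n =
      α * jacobiOp a V f n - β * jacobiOp a V g n := by
  simp only [jacobiOp]
  ring

theorem jacobiMatrix_isHermitian (n : ℕ) : (jacobiMatrix n a V).IsHermitian := by
  refine Matrix.IsHermitian.ext fun i j => ?_
  simp only [jacobiMatrix, star_trivial]
  split_ifs <;> first | omega | (subst_vars; rfl)

private theorem sum_fin_ite_val_eq {m : ℕ} (k : ℕ) (f : ℕ → ℝ) :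
    ∑ j : Fin m, (if (j : ℕ) = k then f j else 0) = if k < m then f k else 0 := by
  rw [Fin.sum_univ_eq_sum_range (fun j => if j = k then f j else 0), sum_ite_eq']
  simp only [mem_range]

/-- `jacobiMatrix m (a (· + c)) (V (· + c))` is `H` on the sites `{c + 1, …, c + m}`; the zeros
of `Z` at `c` and `c + m + 1` play the role of the Dirichlet boundary conditions. -/
theorem jacobiMatrix_shift_mulVec_apply (Z : ℕ → ℝ) {m c : ℕ} (h₀ : Z c = 0)
    (h₁ : Z (c + m + 1) = 0) (i : Fin m) :
    (jacobiMatrix m (fun n => a (n + c)) (fun n => V (n + c)) *ᵥ fun j => Z (j + c + 1)) i =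
      jacobiOp a V Z (i + c + 1) := by
  obtain ⟨i, hi⟩ := i
  have hentry : ∀ j : Fin m,
      jacobiMatrix m (fun n => a (n + c)) (fun n => V (n + c)) ⟨i, hi⟩ j * Z (j + c + 1) =
        (if (j : ℕ) = i + 1 then a (i + c + 2) * Z (j + c + 1) else 0) +
        (if (j : ℕ) = i - 1 then a (i + c + 1) * Z (i + c) else 0) +
        (if (j : ℕ) = i then V (i + c + 1) * Z (j + c + 1) else 0) := by
    intro ⟨j, hj⟩
    simp only [jacobiMatrix, Fin.mk.injEq]
    by_cases hdiag : j = i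
    -- at `i = 0` the truncated `i - 1` is `0` too; that term is `a (c + 1) * Z c = 0`
    · subst hdiag
      rcases Nat.eq_zero_or_pos j with rfl | hj0
      · simp [h₀, add_comm]
      · simp [show j ≠ j - 1 by omega, add_right_comm]
    · split_ifs <;> first | omega | (subst_vars; ring_nf)
  simp only [mulVec, dotProduct, hentry, sum_add_distrib, jacobiOp,
    sum_fin_ite_val_eq (i + 1) (fun j => a (i + c + 2) * Z (j + c + 1)),
    sum_fin_ite_val_eq (i - 1) (fun _ => a (i + c + 1) * Z (i + c)),
    sum_fin_ite_val_eq i (fun j => V (i + c + 1) * Z (j + c + 1)), if_pos hi,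
    if_pos (show i - 1 < m by omega), show i + c + 1 - 1 = i + c by omega]
  by_cases hlast : i + 1 < m
  · rw [if_pos hlast]
    ring_nf
  · rw [if_neg hlast, show i + c + 1 + 1 = c + m + 1 by omega, h₁]
    ring

end Jacobi

section Extension

variable {L : ℕ} (u : Fin L → ℝ)

@[simp] theorem extV_zero : extV L u 0 = 0 := by simp [extV]

@[simp] theorem extV_add_one_self : extV L u (L + 1) = 0 := by simp [extV]

theorem extV_val_add_one (i : Fin L) : extV L u (i + 1) = u i := by
  simp [extV, Nat.lt_iff_add_one_le.mp i.isLt]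

theorem sum_fin_eq_sum_Icc (g : ℕ → ℝ) {x y : ℕ} (hxy : x ≤ y) :
    ∑ i : Fin (y - x + 1), g (i + x) = ∑ n ∈ Icc x y, g n := by
  rw [Fin.sum_univ_eq_sum_range (fun i => g (i + x)), ← Ico_add_one_right_eq_Icc,
    sum_Ico_eq_sum_range, show y + 1 - x = y - x + 1 by omega]
  simp only [add_comm]

theorem sum_extV_sq_eq : ∑ n ∈ Icc 1 L, extV L u n ^ 2 = ∑ i, u i ^ 2 := by
  rcases Nat.eq_zero_or_pos L with rfl | hL
  · simp
  rw [← sum_fin_eq_sum_Icc _ hL, Nat.sub_add_cancel hL]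
  exact sum_congr rfl fun i _ => by rw [extV_val_add_one]

theorem sum_Icc_extV_sq_le (x y : ℕ) : ∑ n ∈ Icc x y, extV L u n ^ 2 ≤ ∑ i, u i ^ 2 := by
  rw [← sum_extV_sq_eq]
  calc ∑ n ∈ Icc x y, extV L u n ^ 2 ≤ ∑ n ∈ Icc x y ∪ Icc 1 L, extV L u n ^ 2 :=
        sum_le_sum_of_subset_of_nonneg subset_union_left fun _ _ _ => sq_nonneg _
    _ = ∑ n ∈ Icc 1 L, extV L u n ^ 2 := by
        refine (sum_subset subset_union_right fun n _ hn => ?_).symm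
        simp [extV, show ¬(1 ≤ n ∧ n ≤ L) by simpa using hn]

end Extension

section JacobiEigen

variable {a V : ℕ → ℝ}

theorem jacobiOp_extV_of_mulVec_eq {L : ℕ} {u : Fin L → ℝ} {c : ℝ}
    (hu : jacobiMatrix L a V *ᵥ u = c • u) {n : ℕ} (hn₁ : 1 ≤ n) (hnL : n ≤ L) :
    jacobiOp a V (extV L u) n = c * extV L u n := by
  have hrow := jacobiMatrix_shift_mulVec_apply a V (extV L u) (m := L) (c := 0)
    (extV_zero u) (by simp) ⟨n - 1, by omega⟩
  have hfun : (fun j : Fin L => extV L u (j + 0 + 1)) = u := funext (extV_val_add_one u)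
  simp only [add_zero, hfun, hu, Pi.smul_apply, smul_eq_mul,
    show n - 1 + 1 = n by omega] at hrow
  rw [← hrow, ← extV_val_add_one u ⟨n - 1, by omega⟩]
  simp only [show n - 1 + 1 = n by omega]

theorem exists_hasEigenvalue_jacobiSub (Z : ℕ → ℝ) {x y : ℕ} (hx : 1 ≤ x) (hxy : x ≤ y)
    (h₀ : Z (x - 1) = 0) (h₁ : Z (y + 1) = 0) (c : ℝ) :
    ∃ μ, HasEigenvalue (toLin' (jacobiSub x y a V)) μ ∧
      (μ - c) ^ 2 * ∑ n ∈ Icc x y, Z n ^ 2 ≤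
        ∑ n ∈ Icc x y, (jacobiOp a V Z n - c * Z n) ^ 2 := by
  have hshift : ∀ i : ℕ, i + (x - 1) + 1 = i + x := fun i => by omega
  obtain ⟨μ, hμ, hle⟩ := (jacobiMatrix_isHermitian _ _ (y - x + 1))
    |>.exists_hasEigenvalue_sq_mul_le (fun i => Z (i + (x - 1) + 1)) c
  refine ⟨μ, hμ, ?_⟩
  have hrow := jacobiMatrix_shift_mulVec_apply a V Z h₀
    (by rwa [show x - 1 + (y - x + 1) + 1 = y + 1 by omega])
  simp only [hrow] at hle
  simp only [hshift] at hle
  rwa [sum_fin_eq_sum_Icc (fun n => Z n ^ 2) hxy,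
    sum_fin_eq_sum_Icc (fun n => (jacobiOp a V Z n - c * Z n) ^ 2) hxy] at hle

end JacobiEigen

section Prufer

variable {L : ℕ} (u : Fin L → ℝ)

def pruferSq (n : ℕ) : ℝ := extV L u n ^ 2 + extV L u (n - 1) ^ 2

theorem pruferSq_nonneg (n : ℕ) : 0 ≤ pruferSq u n := by unfold pruferSq; positivity

theorem pruferR_sq (n : ℕ) : pruferR L u n ^ 2 = pruferSq u n :=
  Real.sq_sqrt (pruferSq_nonneg u n)

theorem sq_le_pruferSq {k n : ℕ} (hk : n - 1 ≤ k) (hkn : k ≤ n) :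
    extV L u k ^ 2 ≤ pruferSq u n := by
  unfold pruferSq
  rcases (show k = n ∨ k = n - 1 by omega) with rfl | rfl
  · linarith [sq_nonneg (extV L u (k - 1))]
  · linarith [sq_nonneg (extV L u n)]

theorem exists_sq_le_two_mul_sq (n : ℕ) :
    ∃ k, n - 1 ≤ k ∧ k ≤ n ∧ pruferSq u n ≤ 2 * extV L u k ^ 2 := by
  unfold pruferSq
  rcases le_total (extV L u (n - 1) ^ 2) (extV L u n ^ 2) with h | h
  · exact ⟨n, by omega, le_rfl, by linarith⟩
  · exact ⟨n - 1, le_rfl, by omega, by linarith⟩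

theorem exists_inv_le_pruferSq (hu : ∑ i, u i ^ 2 = 1) :
    ∃ p, 1 ≤ p ∧ p ≤ L ∧ 1 / (L : ℝ) ≤ pruferSq u p := by
  by_contra! hsmall
  have hterm : ∀ i : Fin L, u i ^ 2 < 1 / L := fun i =>
    calc u i ^ 2 = extV L u (i + 1) ^ 2 := by rw [extV_val_add_one]
      _ ≤ pruferSq u (i + 1) := sq_le_pruferSq u (by omega) le_rfl
      _ < 1 / L := hsmall _ (by omega) (by omega)
  have hL : 0 < L := Nat.pos_of_ne_zero fun h => by subst h; simp at hu
  have := sum_lt_sum_of_nonempty (univ_nonempty_iff.mpr ⟨⟨0, hL⟩⟩) fun i _ => hterm i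
  simp [hu, mul_inv_cancel₀ (Nat.cast_ne_zero.mpr hL.ne' : (L : ℝ) ≠ 0)] at this

theorem pruferSq_le_of_inv_le {v : Fin L → ℝ} {η : ℝ} {n : ℕ} (hL : 0 < L)
    (hpeak : 1 / (L : ℝ) ≤ pruferSq u n) (hprod : pruferR L u n * pruferR L v n ≤ η / L) :
    pruferSq v n ≤ η ^ 2 / L := by
  have hL' : (0 : ℝ) < L := Nat.cast_pos.mpr hL
  have hsq : pruferSq u n * pruferSq v n ≤ (η / L) ^ 2 := by
    rw [← pruferR_sq, ← pruferR_sq, ← mul_pow]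
    exact pow_le_pow_left₀ (mul_nonneg (Real.sqrt_nonneg _) (Real.sqrt_nonneg _)) hprod 2
  have hv := pruferSq_nonneg v n
  rw [div_le_iff₀ hL'] at hpeak
  rw [le_div_iff₀ hL']
  rw [div_pow, le_div_iff₀ (by positivity)] at hsq
  nlinarith [mul_le_mul_of_nonneg_right hpeak hv]

end Prufer

section Transfer

def transferConst (M K : ℝ) : ℝ := 8 * M ^ 2 * K ^ 2 + 2 * M ^ 4 + 1

theorem one_le_transferConst (M K : ℝ) : 1 ≤ transferConst M K := by
  unfold transferConst
  nlinarith [sq_nonneg (M * K), sq_nonneg (M ^ 2)]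

theorem sq_add_sq_le_of_three_term {M K A₁ A₀ W x₀ x₁ x₂ : ℝ} (hM : 0 < M)
    (hA₁ : 1 / M ≤ |A₁|) (hA₀ : |A₀| ≤ M) (hW : |W| ≤ 2 * K)
    (h : A₁ * x₂ + A₀ * x₀ = W * x₁) :
    x₂ ^ 2 + x₁ ^ 2 ≤ transferConst M K * (x₁ ^ 2 + x₀ ^ 2) := by
  have hMA₁ : 1 ≤ M ^ 2 * A₁ ^ 2 := by
    rw [div_le_iff₀' hM] at hA₁
    nlinarith [sq_abs A₁, abs_nonneg A₁]
  have hA₀sq : A₀ ^ 2 ≤ M ^ 2 := by nlinarith [sq_abs A₀, abs_nonneg A₀]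
  have hWsq : W ^ 2 ≤ 4 * K ^ 2 := by nlinarith [sq_abs W, abs_nonneg W]
  have hx₂ : x₂ ^ 2 ≤ M ^ 2 * (A₁ * x₂) ^ 2 := by nlinarith [sq_nonneg x₂]
  have hA₁x₂ : (A₁ * x₂) ^ 2 ≤ 8 * K ^ 2 * x₁ ^ 2 + 2 * M ^ 2 * x₀ ^ 2 := by
    rw [show A₁ * x₂ = W * x₁ - A₀ * x₀ by linarith]
    nlinarith [sq_nonneg (W * x₁ + A₀ * x₀), mul_le_mul_of_nonneg_right hWsq (sq_nonneg x₁),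
      mul_le_mul_of_nonneg_right hA₀sq (sq_nonneg x₀)]
  have hx₂' : x₂ ^ 2 ≤ 8 * M ^ 2 * K ^ 2 * x₁ ^ 2 + 2 * M ^ 4 * x₀ ^ 2 := by
    nlinarith [mul_le_mul_of_nonneg_left hA₁x₂ (sq_nonneg M)]
  unfold transferConst
  nlinarith [mul_nonneg (sq_nonneg (M ^ 2)) (sq_nonneg x₁),
    mul_nonneg (sq_nonneg (M * K)) (sq_nonneg x₀), sq_nonneg x₀]

def StepRatioBounded (C : ℝ) (L : ℕ) (R : ℕ → ℝ) : Prop :=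
  ∀ n, 1 ≤ n → n ≤ L → R (n + 1) ≤ C * R n ∧ R n ≤ C * R (n + 1)

theorem stepRatioBounded_pruferSq {M K c : ℝ} {L : ℕ} {a V : ℕ → ℝ} {u : Fin L → ℝ}
    (hM : 0 < M) (ha : ∀ n, 1 ≤ n → n ≤ L + 1 → 1 / M ≤ |a n| ∧ |a n| ≤ M)
    (hV : ∀ n, 1 ≤ n → n ≤ L → |V n| ≤ K) (hc : |c| ≤ K)
    (hu : jacobiMatrix L a V *ᵥ u = c • u) :
    StepRatioBounded (transferConst M K) L (pruferSq u) := by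
  intro n hn₁ hnL
  have hrec := jacobiOp_extV_of_mulVec_eq hu hn₁ hnL
  have hW : |c - V n| ≤ 2 * K := (abs_sub _ _).trans (by linarith [hV n hn₁ hnL])
  simp only [jacobiOp] at hrec
  simp only [pruferSq, Nat.add_sub_cancel]
  constructor
  · exact sq_add_sq_le_of_three_term hM (ha (n + 1) (by omega) (by omega)).1
      (ha n hn₁ (by omega)).2 hW (by linarith)
  · have := sq_add_sq_le_of_three_term hM (ha n hn₁ (by omega)).1
      (ha (n + 1) (by omega) (by omega)).2 hW (x₂ := extV L u (n - 1)) (x₁ := extV L u n)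
      (x₀ := extV L u (n + 1)) (by linarith)
    linarith

end Transfer

theorem Nat.exists_crossing {P : ℕ → Prop} {p q : ℕ} (hpq : p ≤ q) (hp : P p) (hq : ¬P q) :
    ∃ k, p ≤ k ∧ k < q ∧ P k ∧ ¬P (k + 1) := by
  induction q, hpq using Nat.le_induction with
  | base => exact absurd hp hq
  | succ q hpq ih =>
    by_cases hPq : P q
    · exact ⟨q, hpq, q.lt_succ_self, hPq, hq⟩
    · obtain ⟨k, hpk, hkq, hk⟩ := ih hPq
      exact ⟨k, hpk, hkq.trans q.lt_succ_self, hk⟩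

section StepRatio

variable {C : ℝ} {L : ℕ} {R : ℕ → ℝ}

theorem StepRatioBounded.le_pow_mul (hR : StepRatioBounded C L R) (hC : 0 ≤ C) {m d : ℕ}
    (hm : 1 ≤ m) (hmd : m + d ≤ L + 1) :
    R (m + d) ≤ C ^ d * R m ∧ R m ≤ C ^ d * R (m + d) := by
  induction d with
  | zero => simp
  | succ d ih =>
    obtain ⟨ih₁, ih₂⟩ := ih (by omega)
    obtain ⟨h₁, h₂⟩ := hR (m + d) (by omega) (by omega)
    rw [← add_assoc, pow_succ']
    constructor
    · calc R (m + d + 1) ≤ C * R (m + d) := h₁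
        _ ≤ C * (C ^ d * R m) := mul_le_mul_of_nonneg_left ih₁ hC
        _ = _ := by ring
    · calc R m ≤ C ^ d * R (m + d) := ih₂
        _ ≤ C ^ d * (C * R (m + d + 1)) := mul_le_mul_of_nonneg_left h₂ (pow_nonneg hC d)
        _ = _ := by ring

theorem StepRatioBounded.pos (hR : StepRatioBounded C L R) (hC : 0 ≤ C) {m : ℕ}
    (hm : 1 ≤ m) (hmL : m ≤ L + 1) (hpos : 0 < R m) :
    ∀ n, 1 ≤ n → n ≤ L + 1 → 0 < R n := by
  intro n hn hnL
  rcases le_total n m with hnm | hmn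
  · have := (hR.le_pow_mul hC (d := m - n) hn (by omega)).1
    rw [Nat.add_sub_cancel' hnm] at this
    exact pos_of_mul_pos_right (hpos.trans_le this) (pow_nonneg hC _)
  · have := (hR.le_pow_mul hC (d := n - m) hm (by omega)).2
    rw [Nat.add_sub_cancel' hmn] at this
    exact pos_of_mul_pos_right (hpos.trans_le this) (pow_nonneg hC _)

theorem StepRatioBounded.le_pow_mul_of_crossing {R' : ℕ → ℝ} (hR : StepRatioBounded C L R)
    (hR' : StepRatioBounded C L R') (hC : 1 ≤ C) (hR'₀ : ∀ n, 0 ≤ R' n)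
    {k : ℕ} (hk : 1 ≤ k) (hcross₀ : R' k ≤ R k) (hcross₁ : R (k + 1) ≤ R' (k + 1))
    {d : ℕ} (hd : k + 1 + d ≤ L + 1) :
    R (k + 1 + d) ≤ C ^ (2 * (d + 1)) * R' (k + 1 + d) ∧
      R' (k + 1 + d) ≤ C ^ (2 * (d + 1)) * R (k + 1 + d) := by
  have hC₀ : 0 ≤ C := zero_le_one.trans hC
  obtain ⟨hR₁, -⟩ := hR.le_pow_mul hC₀ (d := d) (by omega) hd
  obtain ⟨-, hR'₁⟩ := hR'.le_pow_mul hC₀ (d := d) (by omega) hd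
  obtain ⟨hR'₂, -⟩ := hR'.le_pow_mul hC₀ (d := d + 1) hk (by omega)
  obtain ⟨-, hR₂⟩ := hR.le_pow_mul hC₀ (d := d + 1) hk (by omega)
  rw [show k + (d + 1) = k + 1 + d by omega] at hR'₂ hR₂
  have hpow : C ^ d * C ^ d ≤ C ^ (2 * (d + 1)) :=
    (pow_add C d d).symm.le.trans (pow_le_pow_right₀ hC (by omega))
  constructor
  · calc R (k + 1 + d) ≤ C ^ d * R (k + 1) := hR₁
      _ ≤ C ^ d * R' (k + 1) := mul_le_mul_of_nonneg_left hcross₁ (pow_nonneg hC₀ d)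
      _ ≤ C ^ d * (C ^ d * R' (k + 1 + d)) :=
          mul_le_mul_of_nonneg_left hR'₁ (pow_nonneg hC₀ d)
      _ = C ^ d * C ^ d * R' (k + 1 + d) := by ring
      _ ≤ _ := mul_le_mul_of_nonneg_right hpow (hR'₀ _)
  · calc R' (k + 1 + d) ≤ C ^ (d + 1) * R' k := hR'₂
      _ ≤ C ^ (d + 1) * R k := mul_le_mul_of_nonneg_left hcross₀ (pow_nonneg hC₀ _)
      _ ≤ C ^ (d + 1) * (C ^ (d + 1) * R (k + 1 + d)) :=
          mul_le_mul_of_nonneg_left hR₂ (pow_nonneg hC₀ _)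
      _ = _ := by ring

theorem StepRatioBounded.exists_comparable_window {C : ℝ} {L S p q : ℕ} {R R' : ℕ → ℝ}
    (hR : StepRatioBounded C L R) (hR' : StepRatioBounded C L R') (hC : 1 ≤ C)
    (hR₀ : ∀ n, 0 ≤ R n) (hR'₀ : ∀ n, 0 ≤ R' n) (hp : 1 ≤ p) (hpq : p ≤ q)
    (hqL : q ≤ L)     (hRp : R' p < R p) (hRq : C ^ (2 * (S + 3)) * R q < R' q) :
    ∃ k, p ≤ k ∧ k + S + 4 ≤ q ∧ ∀ d ≤ S + 2,
      R (k + 1 + d) ≤ C ^ (2 * (S + 3)) * R' (k + 1 + d) ∧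
        R' (k + 1 + d) ≤ C ^ (2 * (S + 3)) * R (k + 1 + d) := by
  have hRq' : ¬R' q < R q := fun h =>
    (hRq.trans h).not_ge (le_mul_of_one_le_left (hR₀ q) (one_le_pow₀ hC))
  obtain ⟨k, hpk, hkq, hk₀, hk₁⟩ :=
    Nat.exists_crossing (P := fun n => R' n < R n) hpq hRp hRq'
  have hcomp : ∀ d ≤ S + 2, k + 1 + d ≤ L + 1 →
      R (k + 1 + d) ≤ C ^ (2 * (S + 3)) * R' (k + 1 + d) ∧
        R' (k + 1 + d) ≤ C ^ (2 * (S + 3)) * R (k + 1 + d) := by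
    intro d hd hdL
    have hpow : C ^ (2 * (d + 1)) ≤ C ^ (2 * (S + 3)) := pow_le_pow_right₀ hC (by omega)
    obtain ⟨h₁, h₂⟩ :=
      hR.le_pow_mul_of_crossing hR' hC hR'₀ (by omega) hk₀.le (not_lt.mp hk₁) hdL
    exact ⟨h₁.trans (mul_le_mul_of_nonneg_right hpow (hR'₀ _)),
      h₂.trans (mul_le_mul_of_nonneg_right hpow (hR₀ _))⟩
  have hfar : k + S + 4 ≤ q := by
    by_contra! hnear
    have := (hcomp (q - (k + 1)) (by omega) (by omega)).2
    rw [show k + 1 + (q - (k + 1)) = q by omega] at this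
    exact this.not_gt hRq
  exact ⟨k, hpk, hfar, fun d hd => hcomp d hd (by omega)⟩

end StepRatio

theorem mem_Icc_div_of_sq_mul_le {μ c E ρ w : ℝ} (hc : |c| ≤ E) (hρ : 0 < ρ)
    (hρ3 : ρ ≤ 1 / 3) (hw : 0 < w) (h : (μ - c) ^ 2 * (9 * ρ ^ 2 * w) ≤ 4 * E ^ 2 * w) :
    μ ∈ Set.Icc (-(E / ρ)) (E / ρ) := by
  have hE : 0 ≤ E := (abs_nonneg c).trans hc
  have hsq : (3 * ρ * (μ - c)) ^ 2 ≤ (2 * E) ^ 2 := by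
    refine le_of_mul_le_mul_right ?_ hw
    linarith
  obtain ⟨h₁, h₂⟩ := abs_le_of_sq_le_sq' hsq (by positivity)
  obtain ⟨hc₁, hc₂⟩ := abs_le.mp hc
  rw [Set.mem_Icc, ← neg_div, div_le_iff₀ hρ, le_div_iff₀ hρ]
  constructor <;> nlinarith

section Cut

variable {L : ℕ} {a V : ℕ → ℝ} {u v : Fin L → ℝ}

def combZeroAt (u v : Fin L → ℝ) (k n : ℕ) : ℝ :=
  extV L v k * extV L u n - extV L u k * extV L v n

theorem combZeroAt_self (k : ℕ) : combZeroAt u v k k = 0 := by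
  unfold combZeroAt; ring

theorem combZeroAt_zero (k : ℕ) : combZeroAt u v k 0 = 0 := by simp [combZeroAt]

theorem combZeroAt_add_one_self (k : ℕ) : combZeroAt u v k (L + 1) = 0 := by simp [combZeroAt]

theorem one_le_eigCount_jacobiSub_of_combZeroAt {Eu Ev E ρ : ℝ}
    (hu : jacobiMatrix L a V *ᵥ u = Eu • u) (hv : jacobiMatrix L a V *ᵥ v = Ev • v)
    (hEu : |Eu| ≤ E) (hEv : |Ev| ≤ E) (hv₁ : ∑ i, v i ^ 2 = 1) {x y k : ℕ} (hx : 1 ≤ x)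
    (hxy : x ≤ y) (hyL : y ≤ L) (h₀ : combZeroAt u v k (x - 1) = 0)
    (h₁ : combZeroAt u v k (y + 1) = 0) (hρ : 0 < ρ) (hρ3 : ρ ≤ 1 / 3)
    (hk : 0 < extV L u k ^ 2 + extV L v k ^ 2)
    (hlow : 9 * ρ ^ 2 * (extV L u k ^ 2 + extV L v k ^ 2) ≤
      ∑ n ∈ Icc x y, combZeroAt u v k n ^ 2) :
    1 ≤ eigCount (jacobiSub x y a V) (Set.Icc (-(E / ρ)) (E / ρ)) := by
  obtain ⟨μ, hμ, hle⟩ :=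
    exists_hasEigenvalue_jacobiSub (a := a) (V := V) _ hx hxy h₀ h₁ Eu
  have hres : ∀ n ∈ Icc x y, jacobiOp a V (combZeroAt u v k) n - Eu * combZeroAt u v k n =
      (Eu - Ev) * extV L u k * extV L v n := by
    intro n hn
    obtain ⟨hxn, hny⟩ := mem_Icc.mp hn
    rw [show combZeroAt u v k = fun m => extV L v k * extV L u m - extV L u k * extV L v m from rfl,
      jacobiOp_sub_smul, jacobiOp_extV_of_mulVec_eq hu (by omega) (by omega),
      jacobiOp_extV_of_mulVec_eq hv (by omega) (by omega)]
    ring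
  have hresidual :
      ∑ n ∈ Icc x y, (jacobiOp a V (combZeroAt u v k) n - Eu * combZeroAt u v k n) ^ 2 ≤
        4 * E ^ 2 * extV L u k ^ 2 := by
    rw [sum_congr rfl fun n hn => by rw [hres n hn, mul_pow], ← mul_sum]
    have hEE : (Eu - Ev) ^ 2 ≤ 4 * E ^ 2 := by
      obtain ⟨h₁, h₂⟩ := abs_le.mp hEu
      obtain ⟨h₃, h₄⟩ := abs_le.mp hEv
      nlinarith
    calc ((Eu - Ev) * extV L u k) ^ 2 * ∑ n ∈ Icc x y, extV L v n ^ 2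
        ≤ ((Eu - Ev) * extV L u k) ^ 2 * 1 :=
          mul_le_mul_of_nonneg_left (hv₁ ▸ sum_Icc_extV_sq_le v x y) (sq_nonneg _)
      _ ≤ 4 * E ^ 2 * extV L u k ^ 2 := by
          rw [mul_one, mul_pow]
          exact mul_le_mul_of_nonneg_right hEE (sq_nonneg _)
  refine one_le_eigCount hμ (mem_Icc_div_of_sq_mul_le hEu hρ hρ3 hk ?_)
  calc (μ - Eu) ^ 2 * (9 * ρ ^ 2 * (extV L u k ^ 2 + extV L v k ^ 2))
      ≤ (μ - Eu) ^ 2 * ∑ n ∈ Icc x y, combZeroAt u v k n ^ 2 :=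
        mul_le_mul_of_nonneg_left hlow (sq_nonneg _)
    _ ≤ 4 * E ^ 2 * extV L u k ^ 2 := hle.trans hresidual
    _ ≤ 4 * E ^ 2 * (extV L u k ^ 2 + extV L v k ^ 2) :=
        mul_le_mul_of_nonneg_left (le_add_of_nonneg_right (sq_nonneg _)) (by positivity)

end Cut

theorem nine_mul_sq_le_sq_sub {Γ η t uk vk us vs : ℝ} (hΓ : 1 ≤ Γ) (hη : 0 < η)
    (hΓη : 16 * Γ * η ≤ 1) (ht : 0 < t) (ht₁ : t ≤ 1) (hus : t ≤ 2 * us ^ 2)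
    (hvs : vs ^ 2 ≤ η ^ 2 * t) (huk : uk ^ 2 ≤ 2 * Γ * vk ^ 2) :
    9 * ((η * t) ^ 4) ^ 2 * (uk ^ 2 + vk ^ 2) ≤ (vk * us - uk * vs) ^ 2 := by
  have hη₁ : η ≤ 1 / 16 := by nlinarith
  have hΓη₂ : 16 * Γ * η ^ 2 ≤ 1 := by nlinarith
  have hcross : uk ^ 2 * vs ^ 2 ≤ 2 * Γ * vk ^ 2 * (η ^ 2 * t) :=
    mul_le_mul huk hvs (sq_nonneg _) (by positivity)
  have hmain : vk ^ 2 * t / 8 ≤ (vk * us - uk * vs) ^ 2 := by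
    nlinarith [sq_nonneg (vk * us - 2 * (uk * vs)), mul_le_mul_of_nonneg_left hus (sq_nonneg vk),
      mul_nonneg (mul_nonneg (sq_nonneg vk) ht.le) (sub_nonneg.mpr hΓη₂)]
  have hη₈ : 27 * Γ * η ^ 8 ≤ 1 / 8 := by
    have : η ^ 7 ≤ (1 / 16) ^ 7 := pow_le_pow_left₀ hη.le hη₁ 7
    nlinarith [pow_pos hη 7]
  have ht₈ : t ^ 8 ≤ t := by
    calc t ^ 8 = t ^ 7 * t := pow_succ t 7
      _ ≤ 1 * t := mul_le_mul_of_nonneg_right (pow_le_one₀ ht.le ht₁) ht.le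
      _ = t := one_mul t
  calc 9 * ((η * t) ^ 4) ^ 2 * (uk ^ 2 + vk ^ 2)
      ≤ 9 * (η ^ 8 * t ^ 8) * (3 * Γ * vk ^ 2) := by
        rw [← pow_mul, mul_pow]
        exact mul_le_mul_of_nonneg_left (by nlinarith) (by positivity)
    _ = 27 * Γ * η ^ 8 * (t ^ 8 * vk ^ 2) := by ring
    _ ≤ 1 / 8 * (t * vk ^ 2) := mul_le_mul hη₈ (mul_le_mul_of_nonneg_right ht₈ (sq_nonneg _))
        (by positivity) (by norm_num)
    _ = vk ^ 2 * t / 8 := by ring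
    _ ≤ _ := hmain

section Sites

variable {L : ℕ} {u v : Fin L → ℝ}

theorem exists_cut_site {Γ : ℝ} {m : ℕ} (hm : pruferSq u m ≤ Γ * pruferSq v m)
    (hpos : 0 < pruferSq v m) :
    ∃ k, m - 1 ≤ k ∧ k ≤ m ∧
      extV L u k ^ 2 ≤ 2 * Γ * extV L v k ^ 2 ∧ 0 < extV L v k ^ 2 := by
  obtain ⟨k, hk₁, hk₂, hk⟩ := exists_sq_le_two_mul_sq v m
  have hΓ : 0 ≤ Γ := nonneg_of_mul_nonneg_left ((pruferSq_nonneg u m).trans hm) hpos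
  refine ⟨k, hk₁, hk₂, ?_, by linarith⟩
  calc extV L u k ^ 2 ≤ pruferSq u m := sq_le_pruferSq u hk₁ hk₂
    _ ≤ Γ * pruferSq v m := hm
    _ ≤ Γ * (2 * extV L v k ^ 2) := mul_le_mul_of_nonneg_left hk hΓ
    _ = 2 * Γ * extV L v k ^ 2 := by ring

theorem exists_peak_site {b : ℝ} {p : ℕ} (hL : 0 < L) (hup : 1 / (L : ℝ) ≤ pruferSq u p)
    (hvp : pruferSq v p ≤ b) :
    ∃ s, p - 1 ≤ s ∧ s ≤ p ∧ 1 ≤ s ∧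
      1 / (L : ℝ) ≤ 2 * extV L u s ^ 2 ∧ extV L v s ^ 2 ≤ b := by
  obtain ⟨s, hs₁, hs₂, hs⟩ := exists_sq_le_two_mul_sq u p
  have hus : 1 / (L : ℝ) ≤ 2 * extV L u s ^ 2 := hup.trans hs
  refine ⟨s, hs₁, hs₂, Nat.one_le_iff_ne_zero.mpr fun h => ?_, hus,
    (sq_le_pruferSq v hs₁ hs₂).trans hvp⟩
  subst h
  have : (0 : ℝ) < 1 / L := by positivity
  simp at hus
  linarith

end Sites

theorem one_le_eigCount_of_cut_sites {L : ℕ} {a V : ℕ → ℝ} {u v : Fin L → ℝ}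
    {Eu Ev E Γ η : ℝ}
    (hu : jacobiMatrix L a V *ᵥ u = Eu • u) (hv : jacobiMatrix L a V *ᵥ v = Ev • v)
    (hEu : |Eu| ≤ E) (hEv : |Ev| ≤ E) (hv₁ : ∑ i, v i ^ 2 = 1) {x y k s : ℕ}
    (hx : 1 ≤ x) (hxy : x ≤ y) (hyL : y ≤ L) (h₀ : combZeroAt u v k (x - 1) = 0)
    (h₁ : combZeroAt u v k (y + 1) = 0) (hxs : x ≤ s) (hsy : s ≤ y) (hΓ : 1 ≤ Γ)
    (hη : 0 < η)
    (hΓη : 16 * Γ * η ≤ 1) (hus : 1 / (L : ℝ) ≤ 2 * extV L u s ^ 2)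
    (hvs : extV L v s ^ 2 ≤ η ^ 2 / L) (huk : extV L u k ^ 2 ≤ 2 * Γ * extV L v k ^ 2)
    (hvk : 0 < extV L v k ^ 2) :
    1 ≤ eigCount (jacobiSub x y a V)
      (Set.Icc (-(E * (L : ℝ) ^ 4 / η ^ 4)) (E * (L : ℝ) ^ 4 / η ^ 4)) := by
  have hL : (1 : ℝ) ≤ L := by exact_mod_cast hx.trans (hxy.trans hyL)
  have ht : (0 : ℝ) < 1 / L := by positivity
  have hlow := nine_mul_sq_le_sq_sub hΓ hη hΓη ht (div_le_one_of_le₀ hL (by positivity)) hus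
    (by rwa [mul_one_div]) huk
  have hsingle : combZeroAt u v k s ^ 2 ≤ ∑ n ∈ Icc x y, combZeroAt u v k n ^ 2 :=
    single_le_sum (fun n _ => sq_nonneg _) (mem_Icc.mpr ⟨hxs, hsy⟩)
  have hρ3 : (η * (1 / L)) ^ 4 ≤ 1 / 3 := by
    have hη₁ : η ≤ 1 / 16 := by nlinarith
    calc (η * (1 / L)) ^ 4 ≤ (1 / 16 * 1) ^ 4 :=
          pow_le_pow_left₀ (by positivity)
            (mul_le_mul hη₁ (div_le_one_of_le₀ hL (by positivity)) ht.le (by norm_num)) 4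
      _ ≤ 1 / 3 := by norm_num
  have key := one_le_eigCount_jacobiSub_of_combZeroAt hu hv hEu hEv hv₁ hx hxy hyL h₀ h₁
    (by positivity) hρ3 (by positivity) (hlow.trans hsingle)
  rwa [show E / (η * (1 / L)) ^ 4 = E * (L : ℝ) ^ 4 / η ^ 4 by field_simp] at key

theorem exists_cuts_of_peaks {M K E η : ℝ} {S L : ℕ} {a V : ℕ → ℝ} {u v : Fin L → ℝ}
    {Eu Ev : ℝ}
    (hM : 0 < M) (ha : ∀ n, 1 ≤ n → n ≤ L + 1 → 1 / M ≤ |a n| ∧ |a n| ≤ M)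
    (hV : ∀ n, 1 ≤ n → n ≤ L → |V n| ≤ K)
    (hu : jacobiMatrix L a V *ᵥ u = Eu • u) (hv : jacobiMatrix L a V *ᵥ v = Ev • v)
    (hEu : |Eu| ≤ E) (hEv : |Ev| ≤ E) (hEK : E ≤ K)
    (hu₁ : ∑ i, u i ^ 2 = 1) (hv₁ : ∑ i, v i ^ 2 = 1)
    (hη : 0 < η) (hΓη : 16 * transferConst M K ^ (2 * (S + 3)) * η ≤ 1)
    {p q : ℕ} (hp : 1 ≤ p) (hpq : p < q) (hqL : q ≤ L)
    (hup : 1 / (L : ℝ) ≤ pruferSq u p) (hvp : pruferSq v p ≤ η ^ 2 / L)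
    (hvq : 1 / (L : ℝ) ≤ pruferSq v q) (huq : pruferSq u q ≤ η ^ 2 / L) :
    ∃ xm xp : ℕ, 1 ≤ xm ∧ xp ≤ L ∧ xm + S ≤ xp ∧
      1 ≤ eigCount (jacobiSub 1 xm a V)
        (Set.Icc (-(E * (L : ℝ) ^ 4 / η ^ 4)) (E * (L : ℝ) ^ 4 / η ^ 4)) ∧
      1 ≤ eigCount (jacobiSub xp L a V)
        (Set.Icc (-(E * (L : ℝ) ^ 4 / η ^ 4)) (E * (L : ℝ) ^ 4 / η ^ 4)) := by
  set C := transferConst M K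
  set Γ := C ^ (2 * (S + 3))
  have hC : 1 ≤ C := one_le_transferConst M K
  have hΓ : 1 ≤ Γ := one_le_pow₀ hC
  have hL : 0 < L := by omega
  have hL' : (0 : ℝ) < L := Nat.cast_pos.mpr hL
  have hRu := stepRatioBounded_pruferSq hM ha hV (hEu.trans hEK) hu
  have hRv := stepRatioBounded_pruferSq hM ha hV (hEv.trans hEK) hv
  have hΓη₂ : Γ * (η ^ 2 / L) < 1 / L := by
    rw [← mul_div_assoc]
    exact div_lt_div_of_pos_right (by nlinarith) hL'
  have hη₂ : η ^ 2 / L < 1 / L := (le_mul_of_one_le_left (by positivity) hΓ).trans_lt hΓη₂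
  obtain ⟨k, hpk, hkq, hwindow⟩ := hRu.exists_comparable_window hRv hC (pruferSq_nonneg u)
    (pruferSq_nonneg v) hp hpq.le hqL (hvp.trans_lt (hη₂.trans_le hup))
    ((mul_le_mul_of_nonneg_left huq (by positivity)).trans_lt (hΓη₂.trans_le hvq))
  have hupos := hRu.pos (zero_le_one.trans hC) hp (by omega) ((one_div_pos.mpr hL').trans_le hup)
  have hvpos := hRv.pos (zero_le_one.trans hC) (hp.trans hpq.le) (by omega)
    ((one_div_pos.mpr hL').trans_le hvq)
  obtain ⟨kA, hkA₁, hkA₂, hukA, hvkA⟩ :=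
    exists_cut_site (hwindow 1 (by omega)).1 (hvpos _ (by omega) (by omega))
  obtain ⟨kB, hkB₁, hkB₂, hvkB, hukB⟩ :=
    exists_cut_site (hwindow (S + 1) (by omega)).2 (hupos _ (by omega) (by omega))
  obtain ⟨su, hsu₁, hsu₂, hsu, husu, hvsu⟩ := exists_peak_site hL hup hvp
  obtain ⟨sv, hsv₁, hsv₂, hsv, hvsv, husv⟩ := exists_peak_site hL hvq huq
  refine ⟨kA - 1, kB + 1, by omega, by omega, by omega, ?_, ?_⟩
  · exact one_le_eigCount_of_cut_sites hu hv hEu hEv hv₁ le_rfl (by omega) (by omega)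
      (combZeroAt_zero kA) (by rw [Nat.sub_add_cancel (by omega)]; exact combZeroAt_self kA)
      (s := su) (by omega) (by omega) hΓ hη hΓη husu hvsu hukA hvkA
  · exact one_le_eigCount_of_cut_sites hv hu hEv hEu hu₁ (by omega) (by omega) le_rfl
      (by rw [Nat.add_sub_cancel]; exact combZeroAt_self kB) (combZeroAt_add_one_self kB)
      (s := sv) (by omega) (by omega) hΓ hη hΓη hvsv husv hvkB hukB

theorem stmt1_general (M K : ℝ) (hM : 1 < M) (S : ℕ) :
    ∃ η₀ : ℝ, 0 < η₀ ∧
      ∀ η : ℝ, 0 < η → η < η₀ →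
      ∀ (L : ℕ) (E : ℝ), 0 ≤ E → E < η ^ 4 / (L : ℝ) ^ 4 → E ≤ K →
      ∀ (a V : ℕ → ℝ),
        (∀ n, 1 ≤ n → n ≤ L + 1 → 1 / M ≤ |a n| ∧ |a n| ≤ M) →
        (∀ n, 1 ≤ n → n ≤ L → |V n| ≤ K) →
        ∀ (u v : Fin L → ℝ) (Eu Ev : ℝ),
          (jacobiMatrix L a V).mulVec u = Eu • u → Eu ∈ Set.Icc (-E) E →
          (jacobiMatrix L a V).mulVec v = Ev • v → Ev ∈ Set.Icc (-E) E →
          (∑ i, u i ^ 2) = 1 → (∑ i, v i ^ 2) = 1 → (∑ i, u i * v i) = 0 →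
          (∀ n, 1 ≤ n → n ≤ L → pruferR L u n * pruferR L v n ≤ η / (L : ℝ)) →
          ∃ xm xp : ℕ, 1 ≤ xm ∧ xp ≤ L ∧ xm + S ≤ xp ∧
            1 ≤ eigCount (jacobiSub 1 xm a V)
                  (Set.Icc (-(E * (L : ℝ) ^ 4 / η ^ 4)) (E * (L : ℝ) ^ 4 / η ^ 4)) ∧
            1 ≤ eigCount (jacobiSub xp L a V)
                  (Set.Icc (-(E * (L : ℝ) ^ 4 / η ^ 4)) (E * (L : ℝ) ^ 4 / η ^ 4)) := by
  have hΓ : 1 ≤ transferConst M K ^ (2 * (S + 3)) := one_le_pow₀ (one_le_transferConst M K)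
  refine ⟨1 / (16 * transferConst M K ^ (2 * (S + 3))), one_div_pos.mpr (by linarith), ?_⟩
  intro η hη hη₀ L E _ _ hEK a V ha hV u v Eu Ev hu hEu hv hEv hu₁ hv₁ _ hr
  have hΓη : 16 * transferConst M K ^ (2 * (S + 3)) * η ≤ 1 := by
    rw [lt_div_iff₀ (by linarith)] at hη₀
    linarith
  have hEu' : |Eu| ≤ E := abs_le.mpr hEu
  have hEv' : |Ev| ≤ E := abs_le.mpr hEv
  obtain ⟨p, hp, hpL, hup⟩ := exists_inv_le_pruferSq u hu₁
  obtain ⟨q, hq, hqL, hvq⟩ := exists_inv_le_pruferSq v hv₁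
  have hvp := pruferSq_le_of_inv_le u (by omega) hup (hr p hp hpL)
  have huq := pruferSq_le_of_inv_le v (by omega) hvq ((mul_comm _ _).trans_le (hr q hq hqL))
  rcases lt_trichotomy p q with hpq | rfl | hqp
  · exact exists_cuts_of_peaks (by linarith) ha hV hu hv hEu' hEv' hEK hu₁ hv₁ hη hΓη hp hpq
      hqL hup hvp hvq huq
  · have hη₂ : η ^ 2 / L < 1 / L :=
      div_lt_div_of_pos_right (by nlinarith) (Nat.cast_pos.mpr (by omega))
    exact absurd (hvq.trans hvp) hη₂.not_ge
  · exact exists_cuts_of_peaks (by linarith) ha hV hv hu hEv' hEu' hEK hv₁ hu₁ hη hΓη hq hqp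
      hpL hvq huq hup hvp

/-- Theorem `part1`. -/
theorem stmt1 (M K : ℝ) (hM : 1 < M) (hK : 0 < K) (S : ℕ) :
    ∃ η₀ : ℝ, 0 < η₀ ∧
      ∀ η : ℝ, 0 < η → η < η₀ →
      ∀ (L : ℕ) (E : ℝ), 0 ≤ E → E < η ^ 4 / (L : ℝ) ^ 4 → E ≤ K →
      ∀ (a V : ℕ → ℝ),
        (∀ n, 1 ≤ n → n ≤ L + 1 → 1 / M ≤ |a n| ∧ |a n| ≤ M) →
        (∀ n, 1 ≤ n → n ≤ L → |V n| ≤ K) →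
        ∀ (u v : Fin L → ℝ) (Eu Ev : ℝ),
          (jacobiMatrix L a V).mulVec u = Eu • u → Eu ∈ Set.Icc (-E) E →
          (jacobiMatrix L a V).mulVec v = Ev • v → Ev ∈ Set.Icc (-E) E →
          (∑ i, u i ^ 2) = 1 → (∑ i, v i ^ 2) = 1 → (∑ i, u i * v i) = 0 →
          (∀ n, 1 ≤ n → n ≤ L → pruferR L u n * pruferR L v n ≤ η / (L : ℝ)) →
          ∃ xm xp : ℕ, 1 ≤ xm ∧ xp ≤ L ∧ xm + S ≤ xp ∧
            1 ≤ eigCount (jacobiSub 1 xm a V)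
                  (Set.Icc (-(E * (L : ℝ) ^ 4 / η ^ 4)) (E * (L : ℝ) ^ 4 / η ^ 4)) ∧
            1 ≤ eigCount (jacobiSub xp L a V)
                  (Set.Icc (-(E * (L : ℝ) ^ 4 / η ^ 4)) (E * (L : ℝ) ^ 4 / η ^ 4)) :=
  stmt1_general M K hM S
end

section
/- Let n ≥ 2 and let u, v ∈ ℝ₊ⁿ be vectors with nonnegative entries satisfying ‖u‖₁ = ‖v‖₁ = 1. Then max over pairs j ≠ k of the squared 2×2 determinant (u_j·v_k − u_k·v_j)² is at least ‖u − v‖₁² / (4 n⁵). -/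
/-!
Let `m` maximise `u`, so `u m ≥ 1/n`. Since `v - u` has sum zero, its largest entry `v k - u k`
is at least `‖u - v‖₁ / (2n)`. If `v m ≤ u m`, then
`u m v k - u k v m ≥ u m (v k - u k) ≥ ‖u - v‖₁ / (2n²)`; otherwise `v m > u m ≥ 1/n` and the
same argument runs with `u` and `v` exchanged. Squaring gives the bound even with `n⁴` in place
of `n⁵`.
-/

open Finset

section

variable {ι : Type*} [Fintype ι]

theorem exists_one_le_card_mul_of_sum_eq_one [Nonempty ι] {u : ι → ℝ} (hu : ∑ i, u i = 1) :
    ∃ m, 1 ≤ Fintype.card ι * u m := by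
  obtain ⟨m, -, hm⟩ := exists_max_image univ u univ_nonempty
  refine ⟨m, ?_⟩
  simpa [hu] using sum_le_card_nsmul univ u (u m) fun i _ ↦ hm i (mem_univ i)

theorem exists_sum_abs_le_two_mul_card_mul_of_sum_eq_zero [Nonempty ι] {f : ι → ℝ}
    (hf : ∑ i, f i = 0) : ∃ k, 0 ≤ f k ∧ ∑ i, |f i| ≤ 2 * Fintype.card ι * f k := by
  obtain ⟨k, -, hk⟩ := exists_max_image univ f univ_nonempty
  have hk0 : 0 ≤ f k := by
    have hsum := sum_le_card_nsmul univ f (f k) fun i _ ↦ hk i (mem_univ i)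
    rw [hf, card_univ, nsmul_eq_mul] at hsum
    exact nonneg_of_mul_nonneg_right hsum (by exact_mod_cast Fintype.card_pos)
  refine ⟨k, hk0, ?_⟩
  calc ∑ i, |f i| = ∑ i, (f i + |f i|) := by rw [sum_add_distrib, hf, zero_add]
    _ ≤ ∑ _i : ι, 2 * f k := by
        refine sum_le_sum fun i _ ↦ ?_
        rcases abs_cases (f i) with ⟨h, -⟩ | ⟨h, -⟩ <;> linarith [hk i (mem_univ i)]
    _ = 2 * Fintype.card ι * f k := by simp only [sum_const, card_univ, nsmul_eq_mul]; ring

variable {u v : ι → ℝ}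

theorem exists_sum_abs_sub_le_mul_det_of_le [Nonempty ι] (hu0 : ∀ i, 0 ≤ u i)
    (hu1 : ∑ i, u i = 1) (hv1 : ∑ i, v i = 1) {m : ι} (hm : 1 ≤ Fintype.card ι * u m)
    (hvm : v m ≤ u m) :
    ∃ k, ∑ i, |u i - v i| ≤ 2 * Fintype.card ι ^ 2 * (u m * v k - u k * v m) := by
  set c : ℝ := (Fintype.card ι : ℝ)
  have hsum : ∑ i, (v i - u i) = 0 := by rw [sum_sub_distrib, hu1, hv1, sub_self]
  obtain ⟨k, hk0, hk⟩ := exists_sum_abs_le_two_mul_card_mul_of_sum_eq_zero hsum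
  refine ⟨k, ?_⟩
  have hc : 0 ≤ c := Nat.cast_nonneg _
  have hdet : u m * (v k - u k) ≤ u m * v k - u k * v m := by
    nlinarith [mul_le_mul_of_nonneg_left hvm (hu0 k)]
  calc ∑ i, |u i - v i| = ∑ i, |v i - u i| := by simp only [abs_sub_comm]
    _ ≤ 2 * c * (v k - u k) := hk
    _ ≤ 2 * c * ((c * u m) * (v k - u k)) := by
        gcongr; exact le_mul_of_one_le_left hk0 hm
    _ ≤ 2 * c ^ 2 * (u m * v k - u k * v m) := by nlinarith [mul_le_mul_of_nonneg_left hdet hc]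

theorem exists_sum_abs_sub_le_mul_abs_det [Nonempty ι] (hu0 : ∀ i, 0 ≤ u i)
    (hv0 : ∀ i, 0 ≤ v i) (hu1 : ∑ i, u i = 1) (hv1 : ∑ i, v i = 1) :
    ∃ j k, ∑ i, |u i - v i| ≤ 2 * Fintype.card ι ^ 2 * |u j * v k - u k * v j| := by
  obtain ⟨m, hm⟩ := exists_one_le_card_mul_of_sum_eq_one hu1
  rcases le_total (v m) (u m) with hvm | humv
  · obtain ⟨k, hk⟩ := exists_sum_abs_sub_le_mul_det_of_le hu0 hu1 hv1 hm hvm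
    exact ⟨m, k, hk.trans (by gcongr; exact le_abs_self _)⟩
  · have hm' : 1 ≤ Fintype.card ι * v m :=
      hm.trans (mul_le_mul_of_nonneg_left humv (Nat.cast_nonneg _))
    obtain ⟨k, hk⟩ := exists_sum_abs_sub_le_mul_det_of_le hv0 hv1 hu1 hm' humv
    refine ⟨k, m, ?_⟩
    calc ∑ i, |u i - v i| = ∑ i, |v i - u i| := by simp only [abs_sub_comm]
      _ ≤ 2 * Fintype.card ι ^ 2 * (v m * u k - v k * u m) := hk
      _ ≤ 2 * Fintype.card ι ^ 2 * |u k * v m - u m * v k| := by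
          gcongr; exact (le_of_eq (by ring)).trans (le_abs_self _)

end

/-- Lemma `grad->jac`.  If `u, v ∈ ℝ₊ⁿ` with `‖u‖₁ = ‖v‖₁ = 1`, then the
maximum over pairs `j ≠ k` of the squared 2×2 determinants `(u_j v_k - u_k v_j)²` is at
least `‖u - v‖₁² / (4 n⁵)`. -/
theorem stmt4 (n : ℕ) (hn : 2 ≤ n) (u v : Fin n → ℝ)
    (hu0 : ∀ i, 0 ≤ u i) (hv0 : ∀ i, 0 ≤ v i)
    (hu1 : (∑ i, |u i|) = 1) (hv1 : (∑ i, |v i|) = 1) :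
    ∃ j k : Fin n, j ≠ k ∧
      (∑ i, |u i - v i|) ^ 2 / (4 * (n : ℝ) ^ 5) ≤ (u j * v k - u k * v j) ^ 2 := by
  have : Nonempty (Fin n) := ⟨⟨0, by omega⟩⟩
  have hsu : ∑ i, u i = 1 := by simpa only [abs_of_nonneg (hu0 _)] using hu1
  have hsv : ∑ i, v i = 1 := by simpa only [abs_of_nonneg (hv0 _)] using hv1
  obtain ⟨j, k, hjk⟩ := exists_sum_abs_sub_le_mul_abs_det hu0 hv0 hsu hsv
  rw [Fintype.card_fin] at hjk
  set D := ∑ i, |u i - v i|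
  rcases (sum_nonneg fun i _ ↦ abs_nonneg (u i - v i) : 0 ≤ D).eq_or_lt with hD | hD
  · refine ⟨⟨0, by omega⟩, ⟨1, by omega⟩, by simp [Fin.ext_iff], ?_⟩
    rw [show D = 0 from hD.symm, zero_pow two_ne_zero, zero_div]
    positivity
  have hn1 : (1 : ℝ) ≤ n := by exact_mod_cast (by omega : 1 ≤ n)
  refine ⟨j, k, ?_, ?_⟩
  · rintro rfl
    simp only [sub_self, abs_zero, mul_zero] at hjk
    linarith
  rw [div_le_iff₀ (by positivity)]
  calc D ^ 2 ≤ (2 * (n : ℝ) ^ 2 * |u j * v k - u k * v j|) ^ 2 := pow_le_pow_left₀ hD.le hjk 2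
    _ = (u j * v k - u k * v j) ^ 2 * (4 * (n : ℝ) ^ 4) := by rw [mul_pow, sq_abs]; ring
    _ ≤ (u j * v k - u k * v j) ^ 2 * (4 * (n : ℝ) ^ 5) := by
        gcongr; norm_num
end

section
/- Let n ∈ ℕ, C > 1, and let u, v ∈ ℝ₊ⁿ with ‖u‖₁ = ‖v‖₁ = 1. Let j₀ be an index such that u_{j₀} = max_j u_j (so that u_{j₀} ≥ 1/n), set 𝒦 := {1,…,n} \ {j₀−1, j₀, j₀+1} and λ := v_{j₀}/u_{j₀}. Assume that ∑_{k∈𝒦} u_k ∈ (1/C, 1) and ∑_{k∈𝒦} v_k ∈ (1/C, 1), and that there exists ε ∈ (0, 1/(2n²C)) such that |u_{j₀}·v_k − v_{j₀}·u_k| ≤ ε for every k ∈ 𝒦. Then λ ∈ [1/(2C), 2C] and ∑_{k∈𝒦} |v_k − λ·u_k| ≤ n²·ε. -/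
/-!
Since `u j₀` is the largest of `n` weights summing to `1`, `n * u j₀ ≥ 1`. Dividing the
hypothesis `|u j₀ * v k - v j₀ * u k| ≤ ε` by `u j₀` gives `|v k - λ * u k| ≤ n * ε` for each
`k ∈ 𝒦`, and summing over the at most `n` indices of `𝒦` gives the bound `n² * ε`. The same bound
controls `|∑_𝒦 v - λ * ∑_𝒦 u|`, and as `n² * ε < 1 / (2 * C)` while both sums lie in
`(1 / C, 1)`, this pins `λ` to `[1 / (2 * C), 2 * C]`.
-/

open Finset

lemma one_le_card_mul_of_sum_eq_one {ι : Type*} [Fintype ι] {u : ι → ℝ} (hu : ∑ i, u i = 1)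
    {j₀ : ι} (hj₀ : ∀ j, u j ≤ u j₀) : 1 ≤ Fintype.card ι * u j₀ := by
  calc (1 : ℝ) = ∑ i, u i := hu.symm
    _ ≤ (univ : Finset ι).card • u j₀ := sum_le_card_nsmul _ _ _ fun i _ ↦ hj₀ i
    _ = Fintype.card ι * u j₀ := by rw [card_univ, nsmul_eq_mul]

lemma abs_sub_div_mul_eq {a b x y : ℝ} (ha : 0 < a) :
    |y - b / a * x| = |a * y - b * x| / a := by
  rw [eq_div_iff ha.ne', ← abs_of_pos ha, ← abs_mul, abs_of_pos ha]
  congr 1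
  field_simp

lemma sum_abs_sub_div_mul_le {ι : Type*} {s : Finset ι} {u v : ι → ℝ} {a b ε N : ℝ}
    (ha : 0 < a) (hNa : 1 ≤ N * a) (hs : (s.card : ℝ) ≤ N) (hε : 0 ≤ ε)
    (h : ∀ k ∈ s, |a * v k - b * u k| ≤ ε) :
    ∑ k ∈ s, |v k - b / a * u k| ≤ N ^ 2 * ε := by
  have hpoint : ∀ k ∈ s, |v k - b / a * u k| ≤ N * ε := by
    intro k hk
    rw [abs_sub_div_mul_eq ha, div_le_iff₀ ha]
    nlinarith [h k hk]
  calc ∑ k ∈ s, |v k - b / a * u k| ≤ s.card • (N * ε) := sum_le_card_nsmul _ _ _ hpoint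
    _ = s.card * (N * ε) := nsmul_eq_mul _ _
    _ ≤ N * (N * ε) := by gcongr; nlinarith
    _ = N ^ 2 * ε := by ring

lemma mem_Icc_of_abs_sub_mul_le {C l su sv δ : ℝ} (hC : 1 < C) (hl : 0 ≤ l)
    (hsu : 1 / C < su) (hsu1 : su < 1) (hsv : 1 / C < sv) (hsv1 : sv < 1)
    (hδ : δ < 1 / (2 * C)) (h : |sv - l * su| ≤ δ) :
    l ∈ Set.Icc (1 / (2 * C)) (2 * C) := by
  have hC0 : 0 < C := by linarith
  have hhalf : 1 / C = 1 / (2 * C) + 1 / (2 * C) := by field_simp; norm_num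
  obtain ⟨hlow, hupp⟩ := abs_le.mp h
  constructor
  · nlinarith [mul_le_mul_of_nonneg_left hsu1.le hl]
  · have hlC : l * (1 / C) < 1 + 1 / (2 * C) := by
      nlinarith [mul_le_mul_of_nonneg_left hsu.le hl]
    have hl_lt : l < C + 1 / 2 := by
      have := mul_lt_mul_of_pos_right hlC hC0
      field_simp at this
      linarith
    linarith

/-- Indices are `0`-based: `j : Fin n` represents the site `j+1 ∈ {1,…,n}`, and
`𝒦 = {1,…,n} \ {j₀-1, j₀, j₀+1}` is the set of `k` with `|k - j₀| ≥ 2`. -/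
theorem stmt10_general (n : ℕ) (C : ℝ) (hC : 1 < C) (u v : Fin n → ℝ)
    (hv0 : ∀ i, 0 ≤ v i)
    (hu1 : (∑ i, u i) = 1)
    (j₀ : Fin n) (hj₀ : ∀ j, u j ≤ u j₀)
    (hsu : 1 / C < ∑ k ∈ Finset.univ.filter
              (fun k : Fin n => k.val + 1 < j₀.val ∨ j₀.val + 1 < k.val), u k)
    (hsu1 : (∑ k ∈ Finset.univ.filter
              (fun k : Fin n => k.val + 1 < j₀.val ∨ j₀.val + 1 < k.val), u k) < 1)
    (hsv : 1 / C < ∑ k ∈ Finset.univ.filter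
              (fun k : Fin n => k.val + 1 < j₀.val ∨ j₀.val + 1 < k.val), v k)
    (hsv1 : (∑ k ∈ Finset.univ.filter
              (fun k : Fin n => k.val + 1 < j₀.val ∨ j₀.val + 1 < k.val), v k) < 1)
    (ε : ℝ) (hε0 : 0 < ε) (hε1 : ε < 1 / (2 * (n : ℝ) ^ 2 * C))
    (hjac : ∀ k ∈ Finset.univ.filter
              (fun k : Fin n => k.val + 1 < j₀.val ∨ j₀.val + 1 < k.val),
            |u j₀ * v k - v j₀ * u k| ≤ ε) :
    v j₀ / u j₀ ∈ Set.Icc (1 / (2 * C)) (2 * C) ∧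
    (∑ k ∈ Finset.univ.filter
        (fun k : Fin n => k.val + 1 < j₀.val ∨ j₀.val + 1 < k.val),
      |v k - (v j₀ / u j₀) * u k|) ≤ (n : ℝ) ^ 2 * ε := by
  set S := univ.filter fun k : Fin n => k.val + 1 < j₀.val ∨ j₀.val + 1 < k.val
  have hnu : 1 ≤ (n : ℝ) * u j₀ := by
    simpa using one_le_card_mul_of_sum_eq_one hu1 hj₀
  have hnu_pos : 0 < (n : ℝ) * u j₀ := by linarith
  have huj : 0 < u j₀ := pos_of_mul_pos_right hnu_pos n.cast_nonneg
  have hn : 0 < (n : ℝ) := pos_of_mul_pos_left hnu_pos huj.le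
  have hS : (S.card : ℝ) ≤ n := by exact_mod_cast (card_le_univ S).trans_eq (Fintype.card_fin n)
  have hsum := sum_abs_sub_div_mul_le huj hnu hS hε0.le hjac
  have hn2ε : (n : ℝ) ^ 2 * ε < 1 / (2 * C) := by
    rw [lt_div_iff₀ (by positivity)] at hε1 ⊢
    linarith
  have hdiff : |∑ k ∈ S, v k - v j₀ / u j₀ * ∑ k ∈ S, u k| ≤ (n : ℝ) ^ 2 * ε := by
    rw [mul_sum, ← sum_sub_distrib]
    exact (abs_sum_le_sum_abs _ _).trans hsum
  exact ⟨mem_Icc_of_abs_sub_mul_le hC (div_nonneg (hv0 j₀) huj.le) hsu hsu1 hsv hsv1 hn2ε hdiff,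
    hsum⟩

/-- Lemma `grad->jac2`.  Indices are `0`-based: `j : Fin n` represents the
site `j+1 ∈ {1,…,n}`, and `𝒦 = {1,…,n} \ {j₀-1, j₀, j₀+1}` is the set of `k` with
`|k - j₀| ≥ 2`. -/
theorem stmt10 (n : ℕ) (C : ℝ) (hC : 1 < C) (u v : Fin n → ℝ)
    (hu0 : ∀ i, 0 ≤ u i) (hv0 : ∀ i, 0 ≤ v i)
    (hu1 : (∑ i, u i) = 1) (hv1 : (∑ i, v i) = 1)
    (j₀ : Fin n) (hj₀ : ∀ j, u j ≤ u j₀)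
    (hsu : 1 / C < ∑ k ∈ Finset.univ.filter
              (fun k : Fin n => k.val + 1 < j₀.val ∨ j₀.val + 1 < k.val), u k)
    (hsu1 : (∑ k ∈ Finset.univ.filter
              (fun k : Fin n => k.val + 1 < j₀.val ∨ j₀.val + 1 < k.val), u k) < 1)
    (hsv : 1 / C < ∑ k ∈ Finset.univ.filter
              (fun k : Fin n => k.val + 1 < j₀.val ∨ j₀.val + 1 < k.val), v k)
    (hsv1 : (∑ k ∈ Finset.univ.filter
              (fun k : Fin n => k.val + 1 < j₀.val ∨ j₀.val + 1 < k.val), v k) < 1)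
    (ε : ℝ) (hε0 : 0 < ε) (hε1 : ε < 1 / (2 * (n : ℝ) ^ 2 * C))
    (hjac : ∀ k ∈ Finset.univ.filter
              (fun k : Fin n => k.val + 1 < j₀.val ∨ j₀.val + 1 < k.val),
            |u j₀ * v k - v j₀ * u k| ≤ ε) :
    v j₀ / u j₀ ∈ Set.Icc (1 / (2 * C)) (2 * C) ∧
    (∑ k ∈ Finset.univ.filter
        (fun k : Fin n => k.val + 1 < j₀.val ∨ j₀.val + 1 < k.val),
      |v k - (v j₀ / u j₀) * u k|) ≤ (n : ℝ) ^ 2 * ε :=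
  stmt10_general n C hC u v hv0 hu1 j₀ hj₀ hsu hsu1 hsv hsv1 ε hε0 hε1 hjac
end

section
/- Fix M > 1. There exist C > 1 and l₀ ∈ ℕ (depending only on M) such that for every l ≥ l₀, every sequence a : {1,…,l−1} → ℝ with 1/M ≤ |a(n)| ≤ M for all n, and every normalized eigenvector φ of the l×l real symmetric tridiagonal matrix with zero diagonal and off-diagonal entries a(1),…,a(l−1), the following holds: setting u(i) := φ(i)², letting j₀ be an index maximizing u, and 𝒦 := {1,…,l} \ {j₀−1, j₀, j₀+1}, one has 1/C < ∑_{k∈𝒦} u(k) < 1. -/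
/-!
Away from the boundary the eigenvalue equation is the three-term recurrence
`a(n-1) u(n-1) + a(n) u(n+1) = E u(n)` with coefficients of modulus in `[1/M, M]`, and
`|E| ≤ 2M` by evaluating it at the maximizing site. Solving the recurrence for an outer term
bounds `u(n-1)²` by `5M⁴ (u(n)² + u(n+1)²)`, and two such steps bound `u(j₀)²` by
`(5M⁴+1)²` times the squares at two sites at distance `2` and `3` from `j₀`, which lie in `𝒦`
as soon as `l ≥ 6`. The at most three sites outside `𝒦` carry mass between `u(j₀)² > 0` and
`3 u(j₀)²`, so the mass on `𝒦` is less than `1` and at least `1 / (3 (5M⁴+1)² + 1)`.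
-/

/-- Hopping matrix on `ℓ²({1,…,l})` with Dirichlet boundary conditions: zero diagonal and
off-diagonal entries `a 1, …, a (l-1)` (entry between sites `n` and `n+1` is `a n`). -/
noncomputable def hoppingMatrix (l : ℕ) (a : ℕ → ℝ) : Matrix (Fin l) (Fin l) ℝ :=
  fun i j =>
    if i.val + 1 = j.val then a (i.val + 1)
    else if j.val + 1 = i.val then a (j.val + 1) else 0

open Finset

lemma sq_le_of_three_term {M c b E x y z : ℝ} (hM : 0 < M) (hc : 1 / M ≤ |c|)
    (hb : |b| ≤ M) (hE : |E| ≤ 2 * M) (h : c * x + b * z = E * y) :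
    x ^ 2 ≤ 5 * M ^ 4 * (y ^ 2 + z ^ 2) := by
  have hMc : 1 ≤ M * |c| := by rwa [div_le_iff₀' hM] at hc
  have hx : |x| ≤ M ^ 2 * (2 * |y| + |z|) :=
    calc |x| ≤ M * |c| * |x| := le_mul_of_one_le_left (abs_nonneg x) hMc
      _ = M * |E * y - b * z| := by rw [mul_assoc, ← abs_mul, ← h, add_sub_cancel_right]
      _ ≤ M * (2 * M * |y| + M * |z|) := by
        gcongr
        refine (abs_sub _ _).trans ?_
        rw [abs_mul, abs_mul]
        gcongr
      _ = M ^ 2 * (2 * |y| + |z|) := by ring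
  have hyz : (2 * |y| + |z|) ^ 2 ≤ 5 * (y ^ 2 + z ^ 2) := by
    rw [← sq_abs y, ← sq_abs z]
    nlinarith [sq_nonneg (|y| - 2 * |z|)]
  calc x ^ 2 = |x| ^ 2 := (sq_abs x).symm
    _ ≤ (M ^ 2 * (2 * |y| + |z|)) ^ 2 := by gcongr
    _ = M ^ 4 * (2 * |y| + |z|) ^ 2 := by ring
    _ ≤ M ^ 4 * (5 * (y ^ 2 + z ^ 2)) := by gcongr
    _ = 5 * M ^ 4 * (y ^ 2 + z ^ 2) := by ring

lemma le_of_two_steps {K p q r s : ℝ} (hK : 0 ≤ K) (hp : p ≤ K * (q + r))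
    (hq : q ≤ K * (r + s)) (hr : 0 ≤ r) (hs : 0 ≤ s) : p ≤ (K + 1) ^ 2 * (r + s) := by
  nlinarith [mul_le_mul_of_nonneg_left hq hK, mul_nonneg hK hr, mul_nonneg hK hs]

section Hopping

variable {l : ℕ}

/-- The paper's `u` on the sites `0, …, l + 1`: `u (i + 1) = φ i`, with the Dirichlet values
`u 0 = u (l + 1) = 0` (and `0` further out). -/
noncomputable def dirichletExtension (φ : Fin l → ℝ) (n : ℕ) : ℝ :=
  if h : 1 ≤ n ∧ n ≤ l then φ ⟨n - 1, by omega⟩ else 0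

lemma dirichletExtension_succ (φ : Fin l → ℝ) (i : Fin l) :
    dirichletExtension φ (i + 1) = φ i := by
  simp [dirichletExtension, Nat.succ_le_of_lt i.isLt]

lemma dirichletExtension_of_not_mem (φ : Fin l → ℝ) {n : ℕ} (h : ¬(1 ≤ n ∧ n ≤ l)) :
    dirichletExtension φ n = 0 :=
  dif_neg h

lemma abs_dirichletExtension_le {φ : Fin l → ℝ} {B : ℝ} (hB : ∀ i, |φ i| ≤ B) (hB₀ : 0 ≤ B)
    (n : ℕ) : |dirichletExtension φ n| ≤ B := by
  unfold dirichletExtension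
  split_ifs
  · exact hB _
  · simpa using hB₀

lemma sum_ite_val_succ_eq (φ : Fin l → ℝ) (m : ℕ) :
    ∑ i : Fin l, (if i.val + 1 = m then φ i else 0) = dirichletExtension φ m := by
  by_cases hm : 1 ≤ m ∧ m ≤ l
  · rw [sum_eq_single ⟨m - 1, by omega⟩
      (fun i _ hi => if_neg fun h => hi (Fin.ext (by simp; omega))) (by simp),
      if_pos (by simp; omega)]
    simp [dirichletExtension, hm]
  · rw [dirichletExtension_of_not_mem φ hm]
    exact sum_eq_zero fun i _ => if_neg (by omega)

theorem hoppingMatrix_mulVec_apply (a : ℕ → ℝ) (φ : Fin l → ℝ) (j : Fin l) :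
    (hoppingMatrix l a).mulVec φ j =
      a (j + 1) * dirichletExtension φ (j + 2) + a j * dirichletExtension φ j := by
  have hentry : ∀ i, hoppingMatrix l a j i * φ i =
      a (j + 1) * (if i.val + 1 = j + 2 then φ i else 0) +
        a j * (if i.val + 1 = j then φ i else 0) := by
    intro i
    simp only [hoppingMatrix]
    split_ifs <;> first | omega | simp_all
  simp only [Matrix.mulVec, dotProduct, hentry, sum_add_distrib, ← mul_sum, sum_ite_val_succ_eq]

theorem hoppingMatrix_mulVec_apply_of_consecutive (a : ℕ → ℝ) (φ : Fin l → ℝ) {i j k : Fin l}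
    (hij : j.val = i.val + 1) (hjk : k.val = j.val + 1) :
    (hoppingMatrix l a).mulVec φ j = a j * φ i + a k * φ k := by
  rw [hoppingMatrix_mulVec_apply, show j.val + 2 = k.val + 1 by omega, hij,
    dirichletExtension_succ, dirichletExtension_succ, ← hij, hjk, add_comm]

variable {a : ℕ → ℝ} {M E : ℝ} {φ : Fin l → ℝ}

theorem abs_hoppingMatrix_mulVec_le (hM : 0 ≤ M) (ha : ∀ n, 1 ≤ n → n ≤ l - 1 → |a n| ≤ M)
    {B : ℝ} (hB : ∀ i, |φ i| ≤ B) (j : Fin l) :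
    |(hoppingMatrix l a).mulVec φ j| ≤ 2 * M * B := by
  have hB₀ : 0 ≤ B := (abs_nonneg _).trans (hB j)
  have hterm : ∀ n m, (1 ≤ m → m ≤ l → 1 ≤ n ∧ n ≤ l - 1) →
      |a n * dirichletExtension φ m| ≤ M * B := by
    intro n m hnm
    by_cases hm : 1 ≤ m ∧ m ≤ l
    · rw [abs_mul]
      exact mul_le_mul (ha n (hnm hm.1 hm.2).1 (hnm hm.1 hm.2).2)
        (abs_dirichletExtension_le hB hB₀ m) (abs_nonneg _) hM
    · rw [dirichletExtension_of_not_mem φ hm, mul_zero, abs_zero]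
      positivity
  have hj := j.isLt
  rw [hoppingMatrix_mulVec_apply]
  calc _ ≤ _ := abs_add_le _ _
    _ ≤ M * B + M * B := add_le_add (hterm _ _ (by omega)) (hterm _ _ (by omega))
    _ = 2 * M * B := by ring

theorem abs_eigenvalue_le (hM : 0 ≤ M) (ha : ∀ n, 1 ≤ n → n ≤ l - 1 → |a n| ≤ M)
    (hφ : (hoppingMatrix l a).mulVec φ = E • φ) {j₀ : Fin l} (hmax : ∀ j, |φ j| ≤ |φ j₀|)
    (hj₀ : φ j₀ ≠ 0) : |E| ≤ 2 * M := by
  have h := abs_hoppingMatrix_mulVec_le hM ha hmax j₀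
  rw [hφ, Pi.smul_apply, smul_eq_mul, abs_mul] at h
  exact le_of_mul_le_mul_right h (abs_pos.2 hj₀)

theorem sq_le_of_consecutive (hM : 0 < M)
    (ha : ∀ n, 1 ≤ n → n ≤ l - 1 → 1 / M ≤ |a n| ∧ |a n| ≤ M) (hE : |E| ≤ 2 * M)
    (hφ : (hoppingMatrix l a).mulVec φ = E • φ) {i j k : Fin l} (hij : j.val = i.val + 1)
    (hjk : k.val = j.val + 1) :
    φ i ^ 2 ≤ 5 * M ^ 4 * (φ j ^ 2 + φ k ^ 2) ∧ φ k ^ 2 ≤ 5 * M ^ 4 * (φ j ^ 2 + φ i ^ 2) := by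
  have hrow : a j * φ i + a k * φ k = E * φ j := by
    rw [← hoppingMatrix_mulVec_apply_of_consecutive a φ hij hjk, hφ, Pi.smul_apply, smul_eq_mul]
  have hk := k.isLt
  have haj := ha j (by omega) (by omega)
  have hak := ha k (by omega) (by omega)
  exact ⟨sq_le_of_three_term hM haj.1 hak.2 hE hrow,
    sq_le_of_three_term hM hak.1 haj.2 hE (by rw [← hrow]; ring)⟩

theorem sq_le_of_four_consecutive (hM : 0 < M)
    (ha : ∀ n, 1 ≤ n → n ≤ l - 1 → 1 / M ≤ |a n| ∧ |a n| ≤ M) (hE : |E| ≤ 2 * M)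
    (hφ : (hoppingMatrix l a).mulVec φ = E • φ) {i₀ i₁ i₂ i₃ : Fin l} (h₁ : i₁.val = i₀.val + 1)
    (h₂ : i₂.val = i₁.val + 1) (h₃ : i₃.val = i₂.val + 1) :
    φ i₀ ^ 2 ≤ (5 * M ^ 4 + 1) ^ 2 * (φ i₂ ^ 2 + φ i₃ ^ 2) ∧
      φ i₃ ^ 2 ≤ (5 * M ^ 4 + 1) ^ 2 * (φ i₁ ^ 2 + φ i₀ ^ 2) := by
  have hK : 0 ≤ 5 * M ^ 4 := by positivity
  obtain ⟨h012, h210⟩ := sq_le_of_consecutive hM ha hE hφ h₁ h₂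
  obtain ⟨h123, h321⟩ := sq_le_of_consecutive hM ha hE hφ h₂ h₃
  exact ⟨le_of_two_steps hK h012 h123 (sq_nonneg _) (sq_nonneg _),
    le_of_two_steps hK h321 h210 (sq_nonneg _) (sq_nonneg _)⟩

/-- The set `𝒦` of the statement, in the `0`-based indexing of `Fin l`. -/
def farSites (j₀ : Fin l) : Finset (Fin l) :=
  univ.filter fun k => k.val + 1 < j₀.val ∨ j₀.val + 1 < k.val

lemma mem_farSites {j₀ k : Fin l} :
    k ∈ farSites j₀ ↔ k.val + 1 < j₀.val ∨ j₀.val + 1 < k.val := by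
  simp [farSites]

lemma card_compl_farSites_le (j₀ : Fin l) : #(farSites j₀)ᶜ ≤ 3 := by
  calc #(farSites j₀)ᶜ = #((farSites j₀)ᶜ.map Fin.valEmbedding) := (card_map _).symm
    _ ≤ #(Icc (j₀.val - 1) (j₀.val + 1)) := by
      refine card_le_card fun n hn => ?_
      obtain ⟨k, hk, rfl⟩ := mem_map.1 hn
      rw [mem_compl, mem_farSites] at hk
      simp only [Fin.valEmbedding_apply, mem_Icc]
      omega
    _ ≤ 3 := by rw [Nat.card_Icc]; omega

theorem sq_le_sum_farSites (hl : 6 ≤ l) (hM : 0 < M)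
    (ha : ∀ n, 1 ≤ n → n ≤ l - 1 → 1 / M ≤ |a n| ∧ |a n| ≤ M) (hE : |E| ≤ 2 * M)
    (hφ : (hoppingMatrix l a).mulVec φ = E • φ) (j₀ : Fin l) :
    φ j₀ ^ 2 ≤ (5 * M ^ 4 + 1) ^ 2 * ∑ k ∈ farSites j₀, φ k ^ 2 := by
  have hj₀ := j₀.isLt
  -- `l ≥ 6` leaves room for three more sites on one side of `j₀`
  obtain ⟨i, k, hik, hi, hk, hbound⟩ : ∃ i k : Fin l, i ≠ k ∧ i ∈ farSites j₀ ∧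
      k ∈ farSites j₀ ∧ φ j₀ ^ 2 ≤ (5 * M ^ 4 + 1) ^ 2 * (φ i ^ 2 + φ k ^ 2) := by
    by_cases hright : j₀.val + 3 < l
    · refine ⟨⟨j₀ + 2, by omega⟩, ⟨j₀ + 3, by omega⟩, by simp [Fin.ext_iff],
        mem_farSites.2 (by simp), mem_farSites.2 (by simp), ?_⟩
      exact (sq_le_of_four_consecutive (i₁ := ⟨j₀ + 1, by omega⟩) hM ha hE hφ rfl rfl rfl).1
    · refine ⟨⟨j₀ - 2, by omega⟩, ⟨j₀ - 3, by omega⟩, by simp [Fin.ext_iff]; omega,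
        mem_farSites.2 (by simp; omega), mem_farSites.2 (by simp; omega), ?_⟩
      exact (sq_le_of_four_consecutive (i₀ := ⟨j₀ - 3, by omega⟩) (i₁ := ⟨j₀ - 2, by omega⟩)
        (i₂ := ⟨j₀ - 1, by omega⟩) hM ha hE hφ
        (by simp; omega) (by simp; omega) (by simp; omega)).2
  have hpair : φ i ^ 2 + φ k ^ 2 ≤ ∑ k ∈ farSites j₀, φ k ^ 2 := by
    rw [← sum_pair (f := fun k => φ k ^ 2) hik]
    exact sum_le_sum_of_subset_of_nonneg (by simp [insert_subset_iff, hi, hk])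
      fun _ _ _ => sq_nonneg _
  exact hbound.trans (by gcongr)

end Hopping

/-- Lemma `resteiglargehopp`.  Indices are `0`-based: `j : Fin l`
represents the site `j+1 ∈ {1,…,l}`, and `𝒦` is the set of `k` with `|k - j₀| ≥ 2`. -/
theorem stmt11 (M : ℝ) (hM : 1 < M) :
    ∃ C : ℝ, 1 < C ∧ ∃ l₀ : ℕ, ∀ l : ℕ, l₀ ≤ l →
      ∀ a : ℕ → ℝ, (∀ n, 1 ≤ n → n ≤ l - 1 → 1 / M ≤ |a n| ∧ |a n| ≤ M) →
      ∀ (φ : Fin l → ℝ) (E : ℝ),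
        (hoppingMatrix l a).mulVec φ = E • φ → (∑ i, φ i ^ 2) = 1 →
        ∀ j₀ : Fin l, (∀ j, φ j ^ 2 ≤ φ j₀ ^ 2) →
          1 / C < (∑ k ∈ Finset.univ.filter
              (fun k : Fin l => k.val + 1 < j₀.val ∨ j₀.val + 1 < k.val), φ k ^ 2) ∧
          (∑ k ∈ Finset.univ.filter
              (fun k : Fin l => k.val + 1 < j₀.val ∨ j₀.val + 1 < k.val), φ k ^ 2) < 1 := by
  refine ⟨3 * (5 * M ^ 4 + 1) ^ 2 + 2, by linarith [sq_nonneg (5 * M ^ 4 + 1)], 6, ?_⟩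
  intro l hl a ha φ E hφ hnorm j₀ hmax
  change 1 / _ < ∑ k ∈ farSites j₀, φ k ^ 2 ∧ ∑ k ∈ farSites j₀, φ k ^ 2 < 1
  set S := ∑ k ∈ farSites j₀, φ k ^ 2
  set R := ∑ k ∈ (farSites j₀)ᶜ, φ k ^ 2
  have hSR : S + R = 1 := (sum_add_sum_compl _ _).trans hnorm
  have hpos : 0 < φ j₀ ^ 2 := by
    by_contra! h
    have : ∑ i, φ i ^ 2 ≤ 0 := sum_nonpos fun i _ => (hmax i).trans h
    linarith
  have hR_ge : φ j₀ ^ 2 ≤ R :=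
    single_le_sum (fun k _ => sq_nonneg (φ k)) (by simp [mem_farSites])
  have hR_le : R ≤ 3 * φ j₀ ^ 2 := by
    refine (sum_le_card_nsmul _ _ _ fun k _ => hmax k).trans ?_
    rw [nsmul_eq_mul]
    gcongr
    exact_mod_cast card_compl_farSites_le j₀
  have hE : |E| ≤ 2 * M := abs_eigenvalue_le (by linarith) (fun n h₁ h₂ => (ha n h₁ h₂).2) hφ
    (fun j => sq_le_sq.1 (hmax j)) (by rintro h; simp [h] at hpos)
  have hS := sq_le_sum_farSites hl (by linarith) ha hE hφ j₀
  constructor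
  · rw [div_lt_iff₀ (by positivity)]
    nlinarith
  · linarith
end

section
/- There exists C > 1 (depending only on M and K) such that for every L, every solution u of the difference equation as in the context that is not identically zero, one has r_u(n) > 0 for every n ∈ {1,…,L}, and (1/C)·r_u(n+1) ≤ r_u(n) ≤ C·r_u(n+1) for every n ∈ {1,…,L−1}. -/
/-- Prüfer radius `r_u(n) = √(u(n)² + u(n-1)²)` of a sequence `u : ℕ → ℝ`. -/
noncomputable def pruf (u : ℕ → ℝ) (n : ℕ) : ℝ :=
  Real.sqrt (u n ^ 2 + u (n - 1) ^ 2)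

/-!
One step of the recurrence `α x + β y = w z` with `|α| ≥ 1/M`, `|β| ≤ M`, `|w| ≤ K` bounds
`|x|` by `M (K |z| + M |y|)`. Applied once forwards and once backwards, this makes consecutive
Prüfer radii comparable with the constant `√(1 + 2M²(K² + M²))`. Comparability in turn means that
the Prüfer radius vanishes either nowhere or everywhere on `{1, …, L}`, and in the latter case
`u` vanishes on `{0, …, L}`.
-/

open Finset

section ThreeTerm

variable {M K α β w x y z : ℝ}

lemma abs_le_of_mul_add_mul_eq (hM : 0 < M) (hα : 1 / M ≤ |α|) (hβ : |β| ≤ M) (hw : |w| ≤ K)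
    (h : α * x + β * y = w * z) : |x| ≤ M * (K * |z| + M * |y|) := by
  have hαx : |α| * |x| ≤ K * |z| + M * |y| :=
    calc |α| * |x| = |w * z - β * y| := by rw [← abs_mul, ← h, add_sub_cancel_right]
      _ ≤ |w| * |z| + |β| * |y| := by
        rw [← abs_mul, ← abs_mul]; exact abs_sub _ _
      _ ≤ K * |z| + M * |y| := by gcongr
  calc |x| = M * (1 / M * |x|) := by field_simp
    _ ≤ M * (|α| * |x|) := by gcongr
    _ ≤ M * (K * |z| + M * |y|) := by gcongr

lemma sq_add_sq_le_of_mul_add_mul_eq (hM : 0 < M) (hα : 1 / M ≤ |α|) (hβ : |β| ≤ M)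
    (hw : |w| ≤ K) (h : α * x + β * y = w * z) :
    x ^ 2 + z ^ 2 ≤ (1 + 2 * M ^ 2 * (K ^ 2 + M ^ 2)) * (z ^ 2 + y ^ 2) := by
  have hx : x ^ 2 ≤ 2 * M ^ 2 * (K ^ 2 * z ^ 2 + M ^ 2 * y ^ 2) :=
    calc x ^ 2 = |x| ^ 2 := (sq_abs x).symm
      _ ≤ (M * (K * |z| + M * |y|)) ^ 2 := by
        gcongr; exact abs_le_of_mul_add_mul_eq hM hα hβ hw h
      _ ≤ M ^ 2 * (2 * ((K * |z|) ^ 2 + (M * |y|) ^ 2)) := by rw [mul_pow]; gcongr; exact add_sq_le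
      _ = 2 * M ^ 2 * (K ^ 2 * z ^ 2 + M ^ 2 * y ^ 2) := by
        rw [mul_pow, mul_pow, sq_abs, sq_abs]; ring
  nlinarith [sq_nonneg (M * K * y), sq_nonneg (M ^ 2 * z)]

end ThreeTerm

lemma sqrt_le_sqrt_mul_sqrt {a b c : ℝ} (hc : 0 ≤ c) (h : a ≤ c * b) : √a ≤ √c * √b :=
  (Real.sqrt_le_sqrt h).trans_eq (Real.sqrt_mul hc b)

section Pruf

lemma pruf_nonneg (u : ℕ → ℝ) (n : ℕ) : 0 ≤ pruf u n := Real.sqrt_nonneg _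

lemma pruf_eq_zero_iff {u : ℕ → ℝ} {n : ℕ} : pruf u n = 0 ↔ u n = 0 ∧ u (n - 1) = 0 := by
  rw [pruf, Real.sqrt_eq_zero (by positivity), add_eq_zero_iff_of_nonneg (sq_nonneg _)
    (sq_nonneg _), sq_eq_zero_iff, sq_eq_zero_iff]

noncomputable def pruferConst (M K : ℝ) : ℝ := √(1 + 2 * M ^ 2 * (K ^ 2 + M ^ 2))

lemma one_lt_pruferConst {M : ℝ} (hM : 0 < M) (K : ℝ) : 1 < pruferConst M K := by
  rw [pruferConst, Real.lt_sqrt zero_le_one]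
  have : 0 < M ^ 2 * (K ^ 2 + M ^ 2) := by positivity
  linarith

variable {M K α β w : ℝ} {u : ℕ → ℝ} {n : ℕ}

lemma pruf_succ_le (hM : 0 < M) (hα : 1 / M ≤ |α|) (hβ : |β| ≤ M) (hw : |w| ≤ K)
    (h : α * u (n + 1) + β * u (n - 1) = w * u n) :
    pruf u (n + 1) ≤ pruferConst M K * pruf u n :=
  sqrt_le_sqrt_mul_sqrt (by positivity) (sq_add_sq_le_of_mul_add_mul_eq hM hα hβ hw h)

lemma pruf_le_pruf_succ (hM : 0 < M) (hα : |α| ≤ M) (hβ : 1 / M ≤ |β|) (hw : |w| ≤ K)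
    (h : α * u (n + 1) + β * u (n - 1) = w * u n) :
    pruf u n ≤ pruferConst M K * pruf u (n + 1) := by
  have hsq := sq_add_sq_le_of_mul_add_mul_eq (x := u (n - 1)) (y := u (n + 1)) hM hβ hα hw
    (by linarith)
  rw [add_comm (u (n - 1) ^ 2), add_comm (u n ^ 2) (u (n + 1) ^ 2)] at hsq
  exact sqrt_le_sqrt_mul_sqrt (by positivity) hsq

end Pruf

lemma eq_zero_on_Icc_of_comparable {f : ℕ → ℝ} {C : ℝ} {a b k : ℕ} (hf : ∀ n, 0 ≤ f n)
    (hup : ∀ n, a ≤ n → n < b → f (n + 1) ≤ C * f n)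
    (hdown : ∀ n, a ≤ n → n < b → f n ≤ C * f (n + 1))
    (hk : k ∈ Icc a b) (h0 : f k = 0) : ∀ m ∈ Icc a b, f m = 0 := by
  rw [mem_Icc] at hk
  have above : ∀ m, k ≤ m → m ≤ b → f m = 0 := by
    intro m hkm
    induction m, hkm using Nat.le_induction with
    | base => exact fun _ => h0
    | succ m hkm ih =>
      intro hmb
      have := hup m (by omega) (by omega)
      rw [ih (by omega), mul_zero] at this
      exact this.antisymm (hf _)
  have below : ∀ j, j ≤ k - a → f (k - j) = 0 := by
    intro j
    induction j with
    | zero => exact fun _ => h0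
    | succ j ih =>
      intro hj
      have := hdown (k - (j + 1)) (by omega) (by omega)
      rw [show k - (j + 1) + 1 = k - j by omega, ih (by omega), mul_zero] at this
      exact this.antisymm (hf _)
  intro m hm
  rw [mem_Icc] at hm
  rcases le_total k m with hkm | hmk
  · exact above m hkm hm.2
  · simpa [show k - (k - m) = m by omega] using below (k - m) (by omega)

theorem stmt16_general (M K : ℝ) (hM : 1 < M) :
    ∃ C : ℝ, 1 < C ∧
      ∀ (L : ℕ) (a W u : ℕ → ℝ),
        (∀ n, 1 / M ≤ |a n| ∧ |a n| ≤ M) → (∀ n, |W n| ≤ K) →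
        (∀ n, 1 ≤ n → n ≤ L - 1 →
          a (n + 1) * u (n + 1) + a n * u (n - 1) = W n * u n) →
        (∃ n, n ≤ L ∧ u n ≠ 0) →
        (∀ n, 1 ≤ n → n ≤ L → 0 < pruf u n) ∧
        (∀ n, 1 ≤ n → n ≤ L - 1 →
          (1 / C) * pruf u (n + 1) ≤ pruf u n ∧ pruf u n ≤ C * pruf u (n + 1)) := by
  have hM0 : 0 < M := by linarith
  have hC := one_lt_pruferConst hM0 K
  refine ⟨pruferConst M K, hC, fun L a W u ha hW heq ⟨m, hmL, hm⟩ => ?_⟩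
  have hup (n) (h1 : 1 ≤ n) (hL : n < L) := pruf_succ_le hM0 (ha (n + 1)).1 (ha n).2 (hW n)
    (heq n h1 (by omega))
  have hdown (n) (h1 : 1 ≤ n) (hL : n < L) := pruf_le_pruf_succ hM0 (ha (n + 1)).2 (ha n).1
    (hW n) (heq n h1 (by omega))
  refine ⟨fun n h1 hL => (pruf_nonneg u n).lt_of_ne' fun h0 => hm ?_, fun n h1 hL => ⟨?_, ?_⟩⟩
  · have hzero := eq_zero_on_Icc_of_comparable (pruf_nonneg u) hup hdown (mem_Icc.2 ⟨h1, hL⟩) h0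
    rcases m with _ | m
    · exact (pruf_eq_zero_iff.1 (hzero 1 (mem_Icc.2 ⟨le_rfl, by omega⟩))).2
    · exact (pruf_eq_zero_iff.1 (hzero (m + 1) (mem_Icc.2 ⟨by omega, hmL⟩))).1
  · rw [one_div_mul_eq_div, div_le_iff₀' (by linarith)]
    exact hup n h1 (by omega)
  · exact hdown n h1 (by omega)

/-- Lemma `progress`.  For any not identically zero solution of the
second-order finite-difference equation, the Prüfer radius is positive and two
consecutive Prüfer radii are comparable, with a constant depending only on `M, K`. -/
theorem stmt16 (M K : ℝ) (hM : 1 < M) (hK : 0 < K) :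
    ∃ C : ℝ, 1 < C ∧
      ∀ (L : ℕ) (a W u : ℕ → ℝ),
        (∀ n, 1 / M ≤ |a n| ∧ |a n| ≤ M) → (∀ n, |W n| ≤ K) →
        (∀ n, 1 ≤ n → n ≤ L - 1 →
          a (n + 1) * u (n + 1) + a n * u (n - 1) = W n * u n) →
        (∃ n, n ≤ L ∧ u n ≠ 0) →
        (∀ n, 1 ≤ n → n ≤ L → 0 < pruf u n) ∧
        (∀ n, 1 ≤ n → n ≤ L - 1 →
          (1 / C) * pruf u (n + 1) ≤ pruf u n ∧ pruf u n ≤ C * pruf u (n + 1)) :=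
  stmt16_general M K hM
end

section
/- There exists ε₀ > 0 (depending only on M and K) such that for every L, every solution u of the difference equation as in the context that is not identically zero, every n ∈ {1,…,L−1} and every ε with 0 ≤ ε ≤ ε₀: if |u(n)| ≤ ε·r_u(n), then |u(n+1)| ≥ ε₀·r_u(n+1). (In Prüfer variables: if |sin(φ_u(n))| ≤ ε then |sin(φ_u(n+1))| ≥ ε₀.) -/
lemma pruf_succ (u : ℕ → ℝ) (n : ℕ) : pruf u (n + 1) = √(u (n + 1) ^ 2 + u n ^ 2) := rfl

lemma sqrt_sq_add_sq_le_abs_add_abs (x y : ℝ) : √(x ^ 2 + y ^ 2) ≤ |x| + |y| :=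
  (Real.sqrt_le_left (by positivity)).2 <| by
    nlinarith [sq_abs x, sq_abs y, mul_nonneg (abs_nonneg x) (abs_nonneg y)]

lemma sqrt_sq_add_sq_le_two_mul_abs {x y ε : ℝ} (hε : ε ≤ 1 / 2)
    (hy : |y| ≤ ε * √(y ^ 2 + x ^ 2)) : √(y ^ 2 + x ^ 2) ≤ 2 * |x| := by
  have := sqrt_sq_add_sq_le_abs_add_abs y x
  nlinarith [Real.sqrt_nonneg (y ^ 2 + x ^ 2)]

lemma abs_le_of_add_eq_mul {M K a a' W x y z : ℝ} (hM : 0 < M) (ha : 1 / M ≤ |a|)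
    (ha' : |a'| ≤ M) (hW : |W| ≤ K) (h : a' * z + a * x = W * y) :
    |x| ≤ M * K * |y| + M ^ 2 * |z| := by
  have hax : |a| * |x| ≤ K * |y| + M * |z| := by
    rw [← abs_mul, show a * x = W * y - a' * z by linarith]
    calc |W * y - a' * z| ≤ |W * y| + |a' * z| := abs_sub _ _
      _ ≤ K * |y| + M * |z| := by
        rw [abs_mul, abs_mul]
        gcongr
  have hx : |x| ≤ M * (|a| * |x|) := by
    rw [div_le_iff₀ hM] at ha
    nlinarith [abs_nonneg x]
  nlinarith

noncomputable def prueferEps (M K : ℝ) : ℝ := 1 / (4 * M * (M + K))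

section prueferEps

variable {M K : ℝ} (hM : 1 ≤ M) (hK : 0 ≤ K)
include hM hK

lemma prueferEps_pos : 0 < prueferEps M K := by
  unfold prueferEps
  have : 0 < M := by linarith
  positivity

lemma prueferEps_le_quarter : prueferEps M K ≤ 1 / 4 := by
  unfold prueferEps
  gcongr
  nlinarith

lemma four_mul_mul_mul_prueferEps_le_one : 4 * M * K * prueferEps M K ≤ 1 := by
  unfold prueferEps
  rw [mul_one_div, div_le_one (by nlinarith)]
  nlinarith

lemma four_mul_sq_mul_prueferEps_le_one : 4 * M ^ 2 * prueferEps M K ≤ 1 := by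
  unfold prueferEps
  rw [mul_one_div, div_le_one (by nlinarith)]
  nlinarith

lemma abs_le_abs_of_abs_le_mul_sqrt {x y z ε : ℝ} (hε : 0 ≤ ε) (hεε₀ : ε ≤ prueferEps M K)
    (hx : |x| ≤ M * K * |y| + M ^ 2 * |z|) (hy : |y| ≤ ε * √(y ^ 2 + x ^ 2)) :
    |y| ≤ |z| := by
  have hε₀ := prueferEps_le_quarter hM hK
  have hMK := four_mul_mul_mul_prueferEps_le_one hM hK
  have hM2 := four_mul_sq_mul_prueferEps_le_one hM hK
  set r := √(y ^ 2 + x ^ 2)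
  have hr : 0 ≤ r := Real.sqrt_nonneg _
  have hr2x : r ≤ 2 * |x| := sqrt_sq_add_sq_le_two_mul_abs (by linarith) hy
  have hMKε : 4 * (M * K * ε) ≤ 1 := by nlinarith [mul_nonneg (by linarith : 0 ≤ M) hK]
  have hMKy : M * K * |y| ≤ r / 4 := by nlinarith [mul_nonneg (by linarith : 0 ≤ M) hK]
  have hrz : r ≤ 4 * M ^ 2 * |z| := by linarith
  calc |y| ≤ ε * r := hy
    _ ≤ ε * (4 * M ^ 2 * |z|) := by gcongr
    _ = 4 * M ^ 2 * ε * |z| := by ring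
    _ ≤ 1 * |z| := by gcongr; nlinarith
    _ = |z| := one_mul _

lemma prueferEps_mul_sqrt_le_abs {x y z ε : ℝ} (hε : 0 ≤ ε) (hεε₀ : ε ≤ prueferEps M K)
    (hx : |x| ≤ M * K * |y| + M ^ 2 * |z|) (hy : |y| ≤ ε * √(y ^ 2 + x ^ 2)) :
    prueferEps M K * √(z ^ 2 + y ^ 2) ≤ |z| := by
  have hyz := abs_le_abs_of_abs_le_mul_sqrt hM hK hε hεε₀ hx hy
  have hε₀ := prueferEps_le_quarter hM hK
  calc prueferEps M K * √(z ^ 2 + y ^ 2) ≤ prueferEps M K * (2 * |z|) := by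
        gcongr
        · exact (prueferEps_pos hM hK).le
        · linarith [sqrt_sq_add_sq_le_abs_add_abs z y]
    _ ≤ |z| := by nlinarith [abs_nonneg z]

end prueferEps

/-- Lemma `not0`.  If `|sin φ_u(n)| ≤ ε`, i.e. `|u(n)| ≤ ε r_u(n)`, then
`|sin φ_u(n+1)| ≥ ε₀`, i.e. `|u(n+1)| ≥ ε₀ r_u(n+1)`, with `ε₀` depending only on `M, K`. -/
theorem stmt17 (M K : ℝ) (hM : 1 < M) (hK : 0 < K) :
    ∃ ε₀ : ℝ, 0 < ε₀ ∧
      ∀ (L : ℕ) (a W u : ℕ → ℝ),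
        (∀ n, 1 / M ≤ |a n| ∧ |a n| ≤ M) → (∀ n, |W n| ≤ K) →
        (∀ n, 1 ≤ n → n ≤ L - 1 →
          a (n + 1) * u (n + 1) + a n * u (n - 1) = W n * u n) →
        (∃ n, n ≤ L ∧ u n ≠ 0) →
        ∀ n, 1 ≤ n → n ≤ L - 1 →
        ∀ ε : ℝ, 0 ≤ ε → ε ≤ ε₀ →
          |u n| ≤ ε * pruf u n → ε₀ * pruf u (n + 1) ≤ |u (n + 1)| := by
  refine ⟨prueferEps M K, prueferEps_pos hM.le hK.le, ?_⟩
  intro L a W u ha hW hu _ n hn hnL ε hε hεε₀ hsmall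
  have hprev : |u (n - 1)| ≤ M * K * |u n| + M ^ 2 * |u (n + 1)| :=
    abs_le_of_add_eq_mul (by linarith) (ha n).1 (ha (n + 1)).2 (hW n) (hu n hn hnL)
  rw [pruf_succ]
  exact prueferEps_mul_sqrt_le_abs hM.le hK.le hε hεε₀ hprev hsmall
end

section
/- There exists ε₀ > 0 (depending only on M and K) such that the following holds for all real E and ε with 0 ≤ E < ε ≤ ε₀. Let u be a not identically zero solution of a(n+1)·u(n+1) + a(n)·u(n−1) = W(n)·u(n), and let v be a not identically zero solution of a(n+1)·v(n+1) + a(n)·v(n−1) = (W(n) + E)·v(n), with a and W as in the context. If at some n ∈ {1,…,L−1} one has |u(n)/r_u(n) − v(n)/r_v(n)| ≤ ε and |u(n−1)/r_u(n) − v(n−1)/r_v(n)| ≤ ε, then |u(n+1)/r_u(n+1) − v(n+1)/r_v(n+1)| ≤ ε/ε₀ and |u(n)/r_u(n+1) − v(n)/r_v(n+1)| ≤ ε/ε₀. (In Prüfer variables: if the angle difference δφ(n) = φ_u(n) − φ_v(n) lies in [0, ε], then δφ(n+1) lies in [0, ε/ε₀].) -/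
section Normalization

variable {F : Type*} [NormedAddCommGroup F] [NormedSpace ℝ F]

theorem inv_norm_smul_smul_of_pos {r : ℝ} (hr : 0 < r) (x : F) :
    ‖r • x‖⁻¹ • (r • x) = ‖x‖⁻¹ • x := by
  rw [norm_smul_of_nonneg hr.le, smul_smul, mul_inv_rev, mul_assoc, inv_mul_cancel₀ hr.ne',
    mul_one]

theorem norm_inv_norm_smul_sub_le {x : F} (hx : x ≠ 0) (y : F) :
    ‖‖x‖⁻¹ • x - ‖y‖⁻¹ • y‖ ≤ 2 * ‖x - y‖ / ‖x‖ := by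
  have hx' : 0 < ‖x‖ := norm_pos_iff.2 hx
  have hunit : ‖‖y‖⁻¹ • y‖ ≤ 1 := mem_closedBall_zero_iff.1 (inv_norm_smul_mem_unitClosedBall y)
  have hsplit : ‖x‖⁻¹ • x - ‖y‖⁻¹ • y = ‖x‖⁻¹ • ((x - y) + (‖y‖ - ‖x‖) • (‖y‖⁻¹ • y)) := by
    rcases eq_or_ne y 0 with rfl | hy
    · simp
    · have hy' : ‖y‖ ≠ 0 := norm_ne_zero_iff.2 hy
      match_scalars <;> field_simp
      ring
  have hmain : ‖(x - y) + (‖y‖ - ‖x‖) • (‖y‖⁻¹ • y)‖ ≤ 2 * ‖x - y‖ :=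
    calc ‖(x - y) + (‖y‖ - ‖x‖) • (‖y‖⁻¹ • y)‖
        ≤ ‖x - y‖ + |‖y‖ - ‖x‖| * ‖‖y‖⁻¹ • y‖ := by
          grw [norm_add_le, norm_smul, Real.norm_eq_abs]
      _ ≤ ‖x - y‖ + ‖x - y‖ * 1 := by
          gcongr
          rw [abs_sub_comm]
          exact abs_norm_sub_norm_le x y
      _ = 2 * ‖x - y‖ := by ring
  rw [hsplit, norm_smul, norm_inv, norm_norm, inv_mul_eq_div]
  gcongr

end Normalization

theorem abs_div_le_mul_abs {M a : ℝ} (hM : 0 < M) (ha : 1 / M ≤ |a|) (b : ℝ) :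
    |b / a| ≤ M * |b| := by
  rw [abs_div, div_le_iff₀ ((one_div_pos.2 hM).trans_le ha)]
  calc |b| = M * |b| * (1 / M) := by field_simp
    _ ≤ M * |b| * |a| := by gcongr

/-- The recurrence `a₁ u(n+1) + a₀ u(n-1) = w u(n)` as a map `u n + i u(n-1) ↦ u(n+1) + i u n`. -/
noncomputable def transfer (a₀ a₁ w : ℝ) (z : ℂ) : ℂ := ⟨(w * z.re - a₀ * z.im) / a₁, z.re⟩

section Transfer

variable {a₀ a₁ w : ℝ}

theorem transfer_smul (r : ℝ) (z : ℂ) : transfer a₀ a₁ w (r • z) = r • transfer a₀ a₁ w z := by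
  apply Complex.ext
  · simp only [transfer, Complex.smul_re, Complex.smul_im, smul_eq_mul]
    ring
  · simp [transfer]

theorem transfer_sub_transfer_add (E : ℝ) (z z' : ℂ) :
    transfer a₀ a₁ w z - transfer a₀ a₁ (w + E) z' =
      transfer a₀ a₁ w (z - z') - ((E * z'.re / a₁ : ℝ) : ℂ) := by
  apply Complex.ext
  · simp only [transfer, Complex.sub_re, Complex.sub_im, Complex.ofReal_re]
    ring
  · simp [transfer]

theorem transfer_eq_zero_iff (ha₀ : a₀ ≠ 0) (ha₁ : a₁ ≠ 0) {z : ℂ} :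
    transfer a₀ a₁ w z = 0 ↔ z = 0 := by
  simp only [transfer, Complex.ext_iff, Complex.zero_re, Complex.zero_im, div_eq_zero_iff, ha₁,
    or_false]
  constructor
  · rintro ⟨h, hre⟩
    simp_all
  · rintro ⟨hre, him⟩
    simp [hre, him]

variable {M K : ℝ}

theorem norm_transfer_le (hM : 0 < M) (hw : |w| ≤ K) (ha₀ : |a₀| ≤ M) (ha₁ : 1 / M ≤ |a₁|)
    (z : ℂ) : ‖transfer a₀ a₁ w z‖ ≤ (1 + M * (K + M)) * ‖z‖ := by
  have hK : 0 ≤ K := (abs_nonneg w).trans hw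
  have hnum : |w * z.re - a₀ * z.im| ≤ (K + M) * ‖z‖ :=
    calc |w * z.re - a₀ * z.im| ≤ |w| * |z.re| + |a₀| * |z.im| := by
          grw [abs_sub, abs_mul, abs_mul]
      _ ≤ K * ‖z‖ + M * ‖z‖ := by
          gcongr
          exacts [Complex.abs_re_le_norm z, Complex.abs_im_le_norm z]
      _ = (K + M) * ‖z‖ := by ring
  calc ‖transfer a₀ a₁ w z‖ ≤ |(w * z.re - a₀ * z.im) / a₁| + |z.re| :=
        Complex.norm_le_abs_re_add_abs_im _
    _ ≤ M * ((K + M) * ‖z‖) + ‖z‖ := by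
        grw [abs_div_le_mul_abs hM ha₁, hnum, Complex.abs_re_le_norm]
    _ = (1 + M * (K + M)) * ‖z‖ := by ring

theorem norm_le_norm_transfer (hM : 0 < M) (hw : |w| ≤ K) (ha₀ : 1 / M ≤ |a₀|)
    (ha₁ : 1 / M ≤ |a₁| ∧ |a₁| ≤ M) (z : ℂ) :
    ‖z‖ ≤ (1 + M * (K + M)) * ‖transfer a₀ a₁ w z‖ := by
  set t := transfer a₀ a₁ w z
  have hre : z.re = t.im := rfl
  have him : z.im = (w * t.im - a₁ * t.re) / a₀ := by
    have ha₀' : a₀ ≠ 0 := abs_pos.1 ((one_div_pos.2 hM).trans_le ha₀)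
    have ha₁' : a₁ ≠ 0 := abs_pos.1 ((one_div_pos.2 hM).trans_le ha₁.1)
    simp only [t, transfer]
    field_simp
    ring
  have hK : 0 ≤ K := (abs_nonneg w).trans hw
  have hnum : |w * t.im - a₁ * t.re| ≤ (K + M) * ‖t‖ :=
    calc |w * t.im - a₁ * t.re| ≤ |w| * |t.im| + |a₁| * |t.re| := by
          grw [abs_sub, abs_mul, abs_mul]
      _ ≤ K * ‖t‖ + M * ‖t‖ := by
          gcongr
          exacts [Complex.abs_im_le_norm t, ha₁.2, Complex.abs_re_le_norm t]
      _ = (K + M) * ‖t‖ := by ring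
  calc ‖z‖ ≤ |z.re| + |z.im| := Complex.norm_le_abs_re_add_abs_im z
    _ ≤ ‖t‖ + M * ((K + M) * ‖t‖) := by
        rw [hre, him]
        grw [abs_div_le_mul_abs hM ha₀, hnum, Complex.abs_im_le_norm]
    _ = (1 + M * (K + M)) * ‖t‖ := by ring

theorem norm_inv_norm_smul_transfer_sub_le (hM : 0 < M) (hw : |w| ≤ K)
    (ha₀ : 1 / M ≤ |a₀| ∧ |a₀| ≤ M) (ha₁ : 1 / M ≤ |a₁| ∧ |a₁| ≤ M) {E : ℝ} (hE : 0 ≤ E)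
    {e f : ℂ} (he : ‖e‖ = 1) (hf : ‖f‖ ≤ 1) :
    ‖‖transfer a₀ a₁ w e‖⁻¹ • transfer a₀ a₁ w e -
        ‖transfer a₀ a₁ (w + E) f‖⁻¹ • transfer a₀ a₁ (w + E) f‖ ≤
      2 * (1 + M * (K + M)) * ((1 + M * (K + M)) * ‖e - f‖ + M * E) := by
  set C := 1 + M * (K + M)
  set x := transfer a₀ a₁ w e
  set y := transfer a₀ a₁ (w + E) f
  have hx : 1 ≤ C * ‖x‖ := he ▸ norm_le_norm_transfer hM hw ha₀.1 ha₁ e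
  have hC : 0 < C := by
    have hK : 0 ≤ K := (abs_nonneg w).trans hw
    positivity
  have hx0 : 0 < ‖x‖ := pos_of_mul_pos_right (one_pos.trans_le hx) hC.le
  have hEf : |E * f.re / a₁| ≤ M * E :=
    calc |E * f.re / a₁| ≤ M * |E * f.re| := abs_div_le_mul_abs hM ha₁.1 _
      _ = M * (E * |f.re|) := by rw [abs_mul, abs_of_nonneg hE]
      _ ≤ M * (E * 1) := by grw [Complex.abs_re_le_norm, hf]
      _ = M * E := by ring
  have hxy : ‖x - y‖ ≤ C * ‖e - f‖ + M * E := by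
    rw [transfer_sub_transfer_add]
    grw [norm_sub_le, norm_transfer_le hM hw ha₀.2 ha₁.1, Complex.norm_real, Real.norm_eq_abs, hEf]
  calc ‖‖x‖⁻¹ • x - ‖y‖⁻¹ • y‖ ≤ 2 * ‖x - y‖ / ‖x‖ :=
        norm_inv_norm_smul_sub_le (norm_pos_iff.1 hx0) y
    _ ≤ 2 * ‖x - y‖ * C := by
        rw [div_le_iff₀ hx0, mul_assoc]
        exact le_mul_of_one_le_right (by positivity) hx
    _ = 2 * C * ‖x - y‖ := by ring
    _ ≤ 2 * C * (C * ‖e - f‖ + M * E) := by gcongr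

end Transfer

def prufVec (u : ℕ → ℝ) (n : ℕ) : ℂ := ⟨u n, u (n - 1)⟩

/-- `sin φ_u(n) + i cos φ_u(n)`. -/
noncomputable def prufUnit (u : ℕ → ℝ) (n : ℕ) : ℂ := ‖prufVec u n‖⁻¹ • prufVec u n

theorem norm_prufVec (u : ℕ → ℝ) (n : ℕ) : ‖prufVec u n‖ = pruf u n := by
  rw [Complex.norm_def, Complex.normSq_mk, pruf, prufVec]
  ring_nf

theorem prufUnit_re (u : ℕ → ℝ) (n : ℕ) : (prufUnit u n).re = u n / pruf u n := by
  rw [prufUnit, Complex.smul_re, norm_prufVec, smul_eq_mul, inv_mul_eq_div]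
  rfl

theorem prufUnit_im (u : ℕ → ℝ) (n : ℕ) : (prufUnit u n).im = u (n - 1) / pruf u n := by
  rw [prufUnit, Complex.smul_im, norm_prufVec, smul_eq_mul, inv_mul_eq_div]
  rfl

theorem norm_prufUnit_le (u : ℕ → ℝ) (n : ℕ) : ‖prufUnit u n‖ ≤ 1 :=
  mem_closedBall_zero_iff.1 (inv_norm_smul_mem_unitClosedBall _)

theorem norm_prufUnit {u : ℕ → ℝ} {n : ℕ} (h : prufVec u n ≠ 0) : ‖prufUnit u n‖ = 1 :=
  norm_smul_inv_norm h

def IsSolution (a w : ℕ → ℝ) (L : ℕ) (u : ℕ → ℝ) : Prop :=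
  ∀ n, 1 ≤ n → n ≤ L - 1 → a (n + 1) * u (n + 1) + a n * u (n - 1) = w n * u n

namespace IsSolution

variable {a w u : ℕ → ℝ} {L n : ℕ}

theorem prufVec_succ (hu : IsSolution a w L u) (hn1 : 1 ≤ n) (hn : n ≤ L - 1)
    (ha : a (n + 1) ≠ 0) :
    prufVec u (n + 1) = transfer (a n) (a (n + 1)) (w n) (prufVec u n) := by
  apply Complex.ext
  · simp only [prufVec, transfer]
    field_simp
    linear_combination hu n hn1 hn
  · rfl

theorem prufVec_ne_zero (hu : IsSolution a w L u) (ha : ∀ k, a k ≠ 0) (hne : ∃ m ≤ L, u m ≠ 0)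
    (hn1 : 1 ≤ n) (hn : n ≤ L) : prufVec u n ≠ 0 := by
  have hstep : ∀ k, 1 ≤ k → k + 1 ≤ L → (prufVec u (k + 1) = 0 ↔ prufVec u k = 0) :=
    fun k hk1 hk => by
      rw [hu.prufVec_succ hk1 (by omega) (ha _), transfer_eq_zero_iff (ha _) (ha _)]
  have hconst : ∀ k, 1 ≤ k → k ≤ L → (prufVec u k = 0 ↔ prufVec u 1 = 0) := by
    intro k hk1
    induction k, hk1 using Nat.le_induction with
    | base => exact fun _ => Iff.rfl
    | succ k hk1 ih => exact fun hk => (hstep k hk1 hk).trans (ih (by omega))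
  intro h
  have hzero : ∀ k, 1 ≤ k → k ≤ L → prufVec u k = 0 :=
    fun k hk1 hk => (hconst k hk1 hk).2 ((hconst n hn1 hn).1 h)
  obtain ⟨m, hm, hum⟩ := hne
  rcases Nat.eq_zero_or_pos m with rfl | hm1
  · exact hum (congrArg Complex.im (hzero 1 le_rfl (by omega)))
  · exact hum (congrArg Complex.re (hzero m hm1 hm))

theorem prufUnit_succ (hu : IsSolution a w L u) (hn1 : 1 ≤ n) (hn : n ≤ L - 1)
    (ha : a (n + 1) ≠ 0) (hp : prufVec u n ≠ 0) :
    prufUnit u (n + 1) =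
      ‖transfer (a n) (a (n + 1)) (w n) (prufUnit u n)‖⁻¹ •
        transfer (a n) (a (n + 1)) (w n) (prufUnit u n) := by
  rw [prufUnit, hu.prufVec_succ hn1 hn ha, prufUnit, transfer_smul,
    inv_norm_smul_smul_of_pos (inv_pos.2 (norm_pos_iff.2 hp))]

end IsSolution

theorem norm_prufUnit_succ_sub_le {M K E : ℝ} {a W u v : ℕ → ℝ} {L n : ℕ} (hM : 0 < M)
    (ha : ∀ k, 1 / M ≤ |a k| ∧ |a k| ≤ M) (hW : |W n| ≤ K) (hE : 0 ≤ E)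
    (hu : IsSolution a W L u) (hv : IsSolution a (fun k => W k + E) L v)
    (hpu : prufVec u n ≠ 0) (hpv : prufVec v n ≠ 0) (hn1 : 1 ≤ n) (hn : n ≤ L - 1) :
    ‖prufUnit u (n + 1) - prufUnit v (n + 1)‖ ≤
      2 * (1 + M * (K + M)) * ((1 + M * (K + M)) * ‖prufUnit u n - prufUnit v n‖ + M * E) := by
  have ha₁ : a (n + 1) ≠ 0 := abs_pos.1 ((one_div_pos.2 hM).trans_le (ha _).1)
  rw [hu.prufUnit_succ hn1 hn ha₁ hpu, hv.prufUnit_succ hn1 hn ha₁ hpv]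
  exact norm_inv_norm_smul_transfer_sub_le hM hW (ha n) (ha (n + 1)) hE (norm_prufUnit hpu)
    (norm_prufUnit_le v n)

/-- Lemma `coli`.  If the Prüfer angle difference of two solutions (for
potentials `W` and `W + E`) is small at `n` — expressed through sines and cosines — then
it stays controlled at `n+1`. -/
theorem stmt18 (M K : ℝ) (hM : 1 < M) (hK : 0 < K) :
    ∃ ε₀ : ℝ, 0 < ε₀ ∧
      ∀ E ε : ℝ, 0 ≤ E → E < ε → ε ≤ ε₀ →
      ∀ (L : ℕ) (a W u v : ℕ → ℝ),
        (∀ n, 1 / M ≤ |a n| ∧ |a n| ≤ M) → (∀ n, |W n| ≤ K) →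
        (∀ n, 1 ≤ n → n ≤ L - 1 →
          a (n + 1) * u (n + 1) + a n * u (n - 1) = W n * u n) →
        (∀ n, 1 ≤ n → n ≤ L - 1 →
          a (n + 1) * v (n + 1) + a n * v (n - 1) = (W n + E) * v n) →
        (∃ n, n ≤ L ∧ u n ≠ 0) → (∃ n, n ≤ L ∧ v n ≠ 0) →
        ∀ n, 1 ≤ n → n ≤ L - 1 →
          |u n / pruf u n - v n / pruf v n| ≤ ε →
          |u (n - 1) / pruf u n - v (n - 1) / pruf v n| ≤ ε →
          |u (n + 1) / pruf u (n + 1) - v (n + 1) / pruf v (n + 1)| ≤ ε / ε₀ ∧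
          |u n / pruf u (n + 1) - v n / pruf v (n + 1)| ≤ ε / ε₀ := by
  have hM0 : 0 < M := one_pos.trans hM
  have hC : 0 ≤ 1 + M * (K + M) := by positivity
  have hMC : M ≤ 1 + M * (K + M) := by nlinarith
  refine ⟨1 / (6 * (1 + M * (K + M)) ^ 2), by positivity, ?_⟩
  intro E ε hE hEε _ L a W u v ha hW hu hv hunz hvnz n hn1 hn hs hc
  have ha0 : ∀ k, a k ≠ 0 := fun k => abs_pos.1 ((one_div_pos.2 hM0).trans_le (ha k).1)
  have hpu := IsSolution.prufVec_ne_zero hu ha0 hunz hn1 (by omega)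
  have hpv := IsSolution.prufVec_ne_zero hv ha0 hvnz hn1 (by omega)
  have hdist : ‖prufUnit u n - prufUnit v n‖ ≤ 2 * ε := by
    grw [Complex.norm_le_abs_re_add_abs_im]
    simp only [Complex.sub_re, Complex.sub_im, prufUnit_re, prufUnit_im]
    linarith
  have hME : M * E ≤ (1 + M * (K + M)) * ε := mul_le_mul hMC hEε.le hE hC
  have hdist' : ‖prufUnit u (n + 1) - prufUnit v (n + 1)‖ ≤
      ε / (1 / (6 * (1 + M * (K + M)) ^ 2)) := by
    grw [norm_prufUnit_succ_sub_le hM0 ha (hW n) hE hu hv hpu hpv hn1 hn, hdist, hME]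
    exact le_of_eq (by field_simp; ring)
  constructor
  · simpa [prufUnit_re] using (Complex.abs_re_le_norm _).trans hdist'
  · simpa [prufUnit_im] using (Complex.abs_im_le_norm _).trans hdist'
end
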